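/- arXiv:1301.3331 — 10 statements merged into one kernel-verified Lean document; each statement's English description precedes it below -/
import Mathlib

section
/- If g and h are completely multiplicative arithmetic functions and f = g * h (Dirichlet convolution), then for all positive integers m, n: f(mn) = ∑_{a | gcd(m,n)} f(m/a) f(n/a) μ(a) g(a) h(a), where μ is the Möbius function. -/
/-!
Expanding `g(a) f(m/a) = ∑_{b ∣ m, a ∣ b} g(b) h(m/b)`
and `h(a) f(n/a) = ∑_{c ∣ n, a ∣ c} g(n/c) h(c)` turns the right-hand side into a sum over pairs
`(b, c)` of divisors of `m` and `n`, each weighted by `∑_{a ∣ gcd(b, c)} μ(a)`, so only the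
coprime pairs survive. By complete multiplicativity such a pair contributes `g(k) h(mn/k)` with
`k = b · (n/c)`, and `(b, c) ↦ b · (n/c)` is a bijection from the coprime pairs onto the divisors
of `mn`, with inverse `k ↦ (k / gcd(k, n), n / gcd(k, n))`.
-/

open Finset ArithmeticFunction
open scoped ArithmeticFunction.Moebius

namespace Nat

theorem sum_divisors_mul_div_comm {R : Type*} [CommSemiring R] (g h : ℕ → R) (n : ℕ) :
    ∑ d ∈ n.divisors, g d * h (n / d) = ∑ d ∈ n.divisors, h d * g (n / d) := by
  rw [← Nat.sum_div_divisors]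
  refine sum_congr rfl fun d hd => ?_
  rw [Nat.div_div_self (dvd_of_mem_divisors hd) (ne_zero_of_mem_divisors hd), mul_comm]

theorem sum_divisors_div_mul_left {M : Type*} [AddCommMonoid M] {a n : ℕ} (ha : a ∣ n)
    (F : ℕ → M) :
    ∑ d ∈ (n / a).divisors, F (a * d) = ∑ b ∈ n.divisors with a ∣ b, F b := by
  obtain rfl | ha₀ := eq_or_ne a 0
  · simp [Nat.eq_zero_of_zero_dvd ha]
  refine sum_nbij' (a * ·) (· / a) ?_ ?_ ?_ ?_ fun _ _ => rfl
  · intro d hd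
    simp only [mem_divisors, mem_filter] at hd ⊢
    exact ⟨⟨(Nat.dvd_div_iff_mul_dvd ha).mp hd.1, fun hn => hd.2 (by simp [hn])⟩,
      dvd_mul_right a d⟩
  · intro b hb
    simp only [mem_divisors, mem_filter] at hb ⊢
    exact ⟨Nat.div_dvd_div hb.2 hb.1.1, (Nat.div_ne_zero_iff_of_dvd ha).mpr ⟨hb.1.2, ha₀⟩⟩
  · intro d _
    exact Nat.mul_div_cancel_left d (Nat.pos_of_ne_zero ha₀)
  · intro b hb
    exact Nat.mul_div_cancel' (mem_filter.mp hb).2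

theorem sum_divisors_mul_eq_sum_coprime {M : Type*} [AddCommMonoid M] (m n : ℕ) (F : ℕ → M) :
    ∑ k ∈ (m * n).divisors, F k =
      ∑ p ∈ m.divisors ×ˢ n.divisors with p.1.Coprime p.2, F (p.1 * (n / p.2)) := by
  symm
  refine sum_nbij' (fun p => p.1 * (n / p.2)) (fun k => (k / k.gcd n, n / k.gcd n))
    ?_ ?_ ?_ ?_ fun _ _ => rfl
  · rintro ⟨b, c⟩ hbc
    simp only [mem_filter, mem_product, mem_divisors] at hbc ⊢
    exact ⟨mul_dvd_mul hbc.1.1.1 (Nat.div_dvd_of_dvd hbc.1.2.1),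
      mul_ne_zero hbc.1.1.2 hbc.1.2.2⟩
  · intro k hk
    simp only [mem_filter, mem_product, mem_divisors] at hk ⊢
    have hg : 0 < k.gcd n :=
      Nat.gcd_pos_of_pos_right k (Nat.pos_of_ne_zero (right_ne_zero_of_mul hk.2))
    refine ⟨⟨⟨?_, left_ne_zero_of_mul hk.2⟩, Nat.div_dvd_of_dvd (Nat.gcd_dvd_right k n),
      right_ne_zero_of_mul hk.2⟩, Nat.coprime_div_gcd_div_gcd hg⟩
    rw [Nat.div_dvd_iff_dvd_mul (Nat.gcd_dvd_left k n) hg, Nat.dvd_gcd_mul_iff_dvd_mul, mul_comm]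
    exact hk.1
  · rintro ⟨b, c⟩ hbc
    simp only [mem_filter, mem_product, mem_divisors] at hbc
    obtain ⟨⟨-, ⟨q, rfl⟩, hcq⟩, hbc⟩ := hbc
    have hc : 0 < c := Nat.pos_of_ne_zero (left_ne_zero_of_mul hcq)
    have hq : 0 < q := Nat.pos_of_ne_zero (right_ne_zero_of_mul hcq)
    simp only [Nat.mul_div_cancel_left q hc, Nat.gcd_mul_right, hbc.gcd_eq_one, one_mul,
      Nat.mul_div_cancel _ hq]
  · intro k hk
    have hn : n ≠ 0 := right_ne_zero_of_mul (ne_zero_of_mem_divisors hk)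
    rw [Nat.div_div_self (Nat.gcd_dvd_right k n) hn, Nat.div_mul_cancel (Nat.gcd_dvd_left k n)]

end Nat

namespace ArithmeticFunction

theorem sum_divisors_moebius {R : Type*} [Ring R] (n : ℕ) :
    ∑ d ∈ n.divisors, (μ d : R) = if n = 1 then 1 else 0 := by
  have := congrArg (· n) (coe_moebius_mul_coe_zeta (R := R))
  simpa only [coe_mul_zeta_apply, intCoe_apply, one_apply] using this

theorem sum_moebius_mul_sum_filter_dvd {R : Type*} [Ring R] {N : ℕ} (hN : N ≠ 0)
    (s : Finset (ℕ × ℕ)) (hs : ∀ p ∈ s, p.1.gcd p.2 ∣ N) (X : ℕ × ℕ → R) :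
    ∑ a ∈ N.divisors, (μ a : R) * ∑ p ∈ s with a ∣ p.1 ∧ a ∣ p.2, X p =
      ∑ p ∈ s with p.1.Coprime p.2, X p := by
  simp_rw [sum_filter, mul_sum]
  rw [sum_comm]
  refine sum_congr rfl fun p hp => ?_
  simp_rw [← Nat.dvd_gcd_iff, mul_ite, mul_zero, ← sum_filter, ← sum_mul,
    Nat.divisors_filter_dvd_of_dvd hN (hs p hp), sum_divisors_moebius, ite_mul, one_mul, zero_mul]

end ArithmeticFunction

theorem mul_sum_divisors_div_of_map_mul {R : Type*} [CommSemiring R] {g : ℕ → R}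
    (hg : ∀ x y, g (x * y) = g x * g y) (h : ℕ → R) {a m : ℕ} (ha : a ∣ m) :
    g a * ∑ d ∈ (m / a).divisors, g d * h (m / a / d) =
      ∑ b ∈ m.divisors with a ∣ b, g b * h (m / b) := by
  rw [mul_sum, ← Nat.sum_divisors_div_mul_left ha]
  refine sum_congr rfl fun d _ => ?_
  rw [hg, Nat.div_div_eq_div_mul, mul_assoc]

theorem sum_divisors_mul_eq_sum_coprime_of_map_mul {R : Type*} [CommSemiring R] {g h : ℕ → R}
    (hg : ∀ x y, g (x * y) = g x * g y) (hh : ∀ x y, h (x * y) = h x * h y) (m n : ℕ) :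
    ∑ k ∈ (m * n).divisors, g k * h (m * n / k) =
      ∑ p ∈ m.divisors ×ˢ n.divisors with p.1.Coprime p.2,
        g p.1 * h (m / p.1) * (h p.2 * g (n / p.2)) := by
  rw [Nat.sum_divisors_mul_eq_sum_coprime]
  refine sum_congr rfl fun ⟨b, c⟩ hbc => ?_
  simp only [mem_filter, mem_product, Nat.mem_divisors] at hbc
  obtain ⟨⟨⟨hb, -⟩, hc, hn⟩, -⟩ := hbc
  rw [← Nat.div_mul_div_comm hb (Nat.div_dvd_of_dvd hc), Nat.div_div_self hc hn, hg, hh]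
  ring

theorem busche_ramanujan_i_general (g h f : ℕ → ℂ)
    (hg : ∀ m n : ℕ, g (m * n) = g m * g n)
    (hh : ∀ m n : ℕ, h (m * n) = h m * h n)
    (hf : ∀ n : ℕ, f n = ∑ d ∈ n.divisors, g d * h (n / d))
    (m n : ℕ) :
    f (m * n) = ∑ a ∈ (Nat.gcd m n).divisors,
      f (m / a) * f (n / a) * (ArithmeticFunction.moebius a : ℂ) * g a * h a := by
  obtain rfl | hm := eq_or_ne m 0
  · simp [hf]
  have hgcd : ∀ p ∈ m.divisors ×ˢ n.divisors, p.1.gcd p.2 ∣ m.gcd n := fun p hp =>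
    gcd_dvd_gcd (Nat.dvd_of_mem_divisors (mem_product.mp hp).1)
      (Nat.dvd_of_mem_divisors (mem_product.mp hp).2)
  rw [hf, sum_divisors_mul_eq_sum_coprime_of_map_mul hg hh,
    ← sum_moebius_mul_sum_filter_dvd (Nat.gcd_ne_zero_left hm) _ hgcd]
  refine sum_congr rfl fun a ha => ?_
  have ham : a ∣ m := (Nat.dvd_of_mem_divisors ha).trans (Nat.gcd_dvd_left m n)
  have han : a ∣ n := (Nat.dvd_of_mem_divisors ha).trans (Nat.gcd_dvd_right m n)
  rw [filter_product, sum_product]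
  dsimp only
  rw [← sum_mul_sum, hf, hf, Nat.sum_divisors_mul_div_comm g h (n / a),
    ← mul_sum_divisors_div_of_map_mul hg h ham, ← mul_sum_divisors_div_of_map_mul hh g han]
  ring

theorem busche_ramanujan_i (g h f : ℕ → ℂ)
    (hg1 : g 1 = 1) (hg : ∀ m n : ℕ, g (m * n) = g m * g n)
    (hh1 : h 1 = 1) (hh : ∀ m n : ℕ, h (m * n) = h m * h n)
    (hf : ∀ n : ℕ, f n = ∑ d ∈ n.divisors, g d * h (n / d))
    (m n : ℕ) (hm : 0 < m) (hn : 0 < n) :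
    f (m * n) = ∑ a ∈ (Nat.gcd m n).divisors,
      f (m / a) * f (n / a) * (ArithmeticFunction.moebius a : ℂ) * g a * h a :=
  busche_ramanujan_i_general g h f hg hh hf m n
end

section
/- If g and h are completely multiplicative arithmetic functions and f = g * h (Dirichlet convolution), then for all positive integers m, n: f(m) f(n) = ∑_{a | gcd(m,n)} f(mn/a²) g(a) h(a). -/
/-!
Complete multiplicativity turns both sides into sums of `g k * h (m * n / k)`: the left one
over pairs `(d, e)` with `d ∣ m`, `e ∣ n`, `k = d * e`, the right one over pairs `(a, c)` with
`a ∣ gcd m n`, `c ∣ m * n / a ^ 2`, `k = a * c`. For fixed `k`, the involution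
`d ↦ gcd(m, k) / d` matches the two index sets.
-/

open Finset

lemma dvd_iff_of_mul_eq_gcd {m n d e a c : ℕ} (hm : m ≠ 0) (hk : d * e = a * c)
    (hG : d * a = m.gcd (d * e)) : e ∣ n ↔ a ∣ n ∧ a * (a * c) ∣ m * n := by
  have hda : d * a ≠ 0 := hG ▸ Nat.gcd_ne_zero_left hm
  have hd : 0 < d := Nat.pos_of_ne_zero (left_ne_zero_of_mul hda)
  have ha : 0 < a := Nat.pos_of_ne_zero (right_ne_zero_of_mul hda)
  have hsq : a * (a * c) = d * a * e := by rw [← hk]; ring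
  constructor
  · intro he
    have hae : a ∣ e := Nat.dvd_of_mul_dvd_mul_left hd (hG ▸ Nat.gcd_dvd_right m (d * e))
    exact ⟨hae.trans he, hsq ▸ hG ▸ mul_dvd_mul (Nat.gcd_dvd_left _ _) he⟩
  · rintro ⟨han, hmn⟩
    -- `a * (d * e)` divides `n * m` and `n * (d * e)`, hence their gcd `n * (d * a)`.
    have : a * (d * e) ∣ a * (d * n) := by
      rw [show a * (d * n) = n * (d * a) by ring, hG, ← Nat.gcd_mul_left]
      exact Nat.dvd_gcd (by rwa [hk, mul_comm n]) (mul_dvd_mul_right han _)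
    exact Nat.dvd_of_mul_dvd_mul_left hd (Nat.dvd_of_mul_dvd_mul_left ha this)

def gcdSwap (m : ℕ) (p : ℕ × ℕ) : ℕ × ℕ :=
  (m.gcd (p.1 * p.2) / p.1, p.1 * p.2 / (m.gcd (p.1 * p.2) / p.1))

section gcdSwap

variable {m x y : ℕ}

lemma mul_gcdSwap_fst (hx : x ∣ m) : x * (gcdSwap m (x, y)).1 = m.gcd (x * y) :=
  Nat.mul_div_cancel' (Nat.dvd_gcd hx (dvd_mul_right x y))

lemma gcdSwap_fst_mul_snd (hx : x ∣ m) :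
    (gcdSwap m (x, y)).1 * (gcdSwap m (x, y)).2 = x * y :=
  Nat.mul_div_cancel' <|
    (Nat.div_dvd_of_dvd (Nat.dvd_gcd hx (dvd_mul_right x y))).trans (Nat.gcd_dvd_right _ _)

lemma gcdSwap_gcdSwap (hm : m ≠ 0) (hx : x ∣ m) : gcdSwap m (gcdSwap m (x, y)) = (x, y) := by
  have hprod := gcdSwap_fst_mul_snd (y := y) hx
  have hfst : m.gcd (x * y) / (gcdSwap m (x, y)).1 = x :=
    Nat.div_div_self (Nat.dvd_gcd hx (dvd_mul_right x y)) (Nat.gcd_ne_zero_left hm)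
  have hx0 : 0 < x := Nat.pos_of_dvd_of_pos hx (Nat.pos_of_ne_zero hm)
  simp only [gcdSwap] at hprod hfst ⊢
  rw [hprod, hfst, Nat.mul_div_cancel_left y hx0]

lemma gcdSwap_fst_dvd (hx : x ∣ m) : (gcdSwap m (x, y)).1 ∣ m :=
  (Dvd.intro_left _ (mul_gcdSwap_fst hx)).trans (Nat.gcd_dvd_left _ _)

lemma dvd_iff_gcdSwap_fst_dvd {n : ℕ} (hm : m ≠ 0) (hx : x ∣ m) :
    y ∣ n ↔ (gcdSwap m (x, y)).1 ∣ n ∧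
      (gcdSwap m (x, y)).1 * ((gcdSwap m (x, y)).1 * (gcdSwap m (x, y)).2) ∣ m * n :=
  dvd_iff_of_mul_eq_gcd hm (gcdSwap_fst_mul_snd hx).symm (mul_gcdSwap_fst hx)

lemma gcdSwap_snd_dvd_iff {n : ℕ} (hm : m ≠ 0) (hx : x ∣ m) :
    (gcdSwap m (x, y)).2 ∣ n ↔ x ∣ n ∧ x * (x * y) ∣ m * n := by
  refine dvd_iff_of_mul_eq_gcd hm (gcdSwap_fst_mul_snd hx) ?_
  rw [gcdSwap_fst_mul_snd hx, mul_comm, mul_gcdSwap_fst hx]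

end gcdSwap

lemma mem_sigma_divisors_div_sq {m n a c : ℕ} :
    (⟨a, c⟩ : Σ _ : ℕ, ℕ) ∈ (m.gcd n).divisors.sigma (fun a => (m * n / a ^ 2).divisors) ↔
      a ∣ m ∧ a ∣ n ∧ a * (a * c) ∣ m * n ∧ m * n ≠ 0 := by
  simp only [mem_sigma, Nat.mem_divisors, Nat.dvd_gcd_iff, ne_eq, Nat.gcd_eq_zero_iff]
  constructor
  · rintro ⟨⟨⟨ham, han⟩, -⟩, hc, hmn⟩
    have ha2 : a ^ 2 ∣ m * n := sq a ▸ mul_dvd_mul ham han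
    rw [Nat.dvd_div_iff_mul_dvd ha2, sq, mul_assoc] at hc
    exact ⟨ham, han, hc, ((Nat.div_ne_zero_iff_of_dvd ha2).1 hmn).1⟩
  · rintro ⟨ham, han, hc, hmn⟩
    have ha2 : a ^ 2 ∣ m * n := sq a ▸ mul_dvd_mul ham han
    refine ⟨⟨⟨ham, han⟩, fun h => hmn (by simp [h.1])⟩, ?_, ?_⟩
    · rwa [Nat.dvd_div_iff_mul_dvd ha2, sq, mul_assoc]
    · exact (Nat.div_ne_zero_iff_of_dvd ha2).2 ⟨hmn, pow_ne_zero 2 fun h => by simp_all⟩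

theorem sum_divisors_sum_divisors_eq_sum_divisors_gcd {M : Type*} [AddCommMonoid M]
    (F : ℕ → M) (m n : ℕ) :
    ∑ d ∈ m.divisors, ∑ e ∈ n.divisors, F (d * e) =
      ∑ a ∈ (m.gcd n).divisors, ∑ c ∈ (m * n / a ^ 2).divisors, F (a * c) := by
  rcases eq_or_ne m 0 with rfl | hm
  · simp
  rw [← sum_product', sum_sigma']
  refine sum_nbij' (fun p => ⟨(gcdSwap m p).1, (gcdSwap m p).2⟩) (fun q => gcdSwap m (q.1, q.2))
    ?_ ?_ ?_ ?_ ?_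
  · rintro ⟨x, y⟩ hxy
    simp only [mem_product, Nat.mem_divisors] at hxy
    obtain ⟨⟨hx, -⟩, hy, hn⟩ := hxy
    obtain ⟨han, hmn⟩ := (dvd_iff_gcdSwap_fst_dvd hm hx).1 hy
    exact mem_sigma_divisors_div_sq.2 ⟨gcdSwap_fst_dvd hx, han, hmn, mul_ne_zero hm hn⟩
  · rintro ⟨a, c⟩ hac
    obtain ⟨ha, han, hmn, hmn0⟩ := mem_sigma_divisors_div_sq.1 hac
    simp only [mem_product, Nat.mem_divisors]
    exact ⟨⟨gcdSwap_fst_dvd ha, hm⟩, (gcdSwap_snd_dvd_iff hm ha).2 ⟨han, hmn⟩,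
      right_ne_zero_of_mul hmn0⟩
  · rintro ⟨x, y⟩ hxy
    exact gcdSwap_gcdSwap hm (Nat.dvd_of_mem_divisors (mem_product.1 hxy).1)
  · rintro ⟨a, c⟩ hac
    simp only [gcdSwap_gcdSwap hm (mem_sigma_divisors_div_sq.1 hac).1]
  · rintro ⟨x, y⟩ hxy
    simp only [gcdSwap_fst_mul_snd (Nat.dvd_of_mem_divisors (mem_product.1 hxy).1)]

lemma div_mul_eq_mul_div_sq_div {N a c : ℕ} (h : a * (a * c) ∣ N) :
    N / (a * c) = a * (N / a ^ 2 / c) := by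
  rw [Nat.div_div_eq_div_mul, sq, mul_assoc]
  obtain ⟨k, rfl⟩ := h
  rcases Nat.eq_zero_or_pos (a * c) with h0 | h0
  · simp [h0]
  · rw [Nat.mul_div_cancel_left _ (Nat.mul_pos (Nat.pos_of_mul_pos_right h0) h0),
      show a * (a * c) * k = a * c * (a * k) by ring, Nat.mul_div_cancel_left _ h0]

theorem busche_ramanujan_ii_general (g h f : ℕ → ℂ)
    (hg : ∀ m n : ℕ, g (m * n) = g m * g n)
    (hh : ∀ m n : ℕ, h (m * n) = h m * h n)
    (hf : ∀ n : ℕ, f n = ∑ d ∈ n.divisors, g d * h (n / d))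
    (m n : ℕ) :
    f m * f n = ∑ a ∈ (Nat.gcd m n).divisors,
      f (m * n / (a ^ 2)) * g a * h a := by
  have hL : f m * f n = ∑ d ∈ m.divisors, ∑ e ∈ n.divisors, g (d * e) * h (m * n / (d * e)) := by
    rw [hf m, hf n, sum_mul_sum]
    refine sum_congr rfl fun d hd => sum_congr rfl fun e he => ?_
    rw [hg, ← Nat.div_mul_div_comm (Nat.dvd_of_mem_divisors hd) (Nat.dvd_of_mem_divisors he), hh]
    ring
  rw [hL, sum_divisors_sum_divisors_eq_sum_divisors_gcd (fun k => g k * h (m * n / k))]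
  refine sum_congr rfl fun a ha => ?_
  rw [hf, sum_mul, sum_mul]
  refine sum_congr rfl fun c hc => ?_
  have hac := (mem_sigma_divisors_div_sq.1 (mem_sigma.2 ⟨ha, hc⟩)).2.2.1
  rw [div_mul_eq_mul_div_sq_div hac, hg, hh]
  ring

theorem busche_ramanujan_ii (g h f : ℕ → ℂ)
    (hg1 : g 1 = 1) (hg : ∀ m n : ℕ, g (m * n) = g m * g n)
    (hh1 : h 1 = 1) (hh : ∀ m n : ℕ, h (m * n) = h m * h n)
    (hf : ∀ n : ℕ, f n = ∑ d ∈ n.divisors, g d * h (n / d))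
    (m n : ℕ) (hm : 0 < m) (hn : 0 < n) :
    f m * f n = ∑ a ∈ (Nat.gcd m n).divisors,
      f (m * n / (a ^ 2)) * g a * h a :=
  busche_ramanujan_ii_general g h f hg hh hf m n
end

section
/- For the divisor function d and all positive integers m, n: d(m) d(n) = ∑_{a | gcd(m,n)} d(mn/a²). -/
/-!
Both sides are multiplicative in the pair `(m, n)`: if `m₁ n₁` is coprime to `m₂ n₂`, then
`gcd (m₁ m₂) (n₁ n₂) = gcd m₁ n₁ * gcd m₂ n₂`, each divisor `a` of it splits uniquely as `a₁ a₂`, and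
`m₁ m₂ n₁ n₂ / (a₁ a₂)² = (m₁ n₁ / a₁²) (m₂ n₂ / a₂²)` with coprime factors. This reduces the identity
to `m = p ^ i`, `n = p ^ j`, where it reads `∑_{k ≤ min i j} (i + j - 2k + 1) = (i + 1) (j + 1)`.
-/

open Finset

theorem Nat.gcd_pow_pow (a i j : ℕ) : Nat.gcd (a ^ i) (a ^ j) = a ^ min i j := by
  rcases le_total i j with h | h
  · rw [Nat.gcd_eq_left (pow_dvd_pow a h), min_eq_left h]
  · rw [Nat.gcd_eq_right (pow_dvd_pow a h), min_eq_right h]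

theorem Nat.sq_dvd_mul_of_dvd_gcd {a m n : ℕ} (h : a ∣ Nat.gcd m n) : a ^ 2 ∣ m * n := by
  rw [sq]
  exact mul_dvd_mul (h.trans (Nat.gcd_dvd_left m n)) (h.trans (Nat.gcd_dvd_right m n))

theorem Nat.Coprime.gcd_mul_mul {m₁ n₁ m₂ n₂ : ℕ} (h : Coprime (m₁ * n₁) (m₂ * n₂)) :
    Nat.gcd (m₁ * m₂) (n₁ * n₂) = Nat.gcd m₁ n₁ * Nat.gcd m₂ n₂ := by
  have hn : Coprime n₁ n₂ := h.coprime_mul_left.coprime_mul_left_right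
  have hm₂n₁ : Coprime m₂ n₁ := (h.coprime_mul_left.coprime_mul_right_right).symm
  have hm₁n₂ : Coprime m₁ n₂ := h.coprime_mul_right.coprime_mul_left_right
  rw [hn.gcd_mul, hm₂n₁.gcd_mul_right_cancel, hm₁n₂.gcd_mul_left_cancel]

theorem Nat.Coprime.sum_divisors_mul_eq_sum_sum {M : Type*} [AddCommMonoid M] {m n : ℕ}
    (h : m.Coprime n) (f : ℕ → M) :
    ∑ d ∈ (m * n).divisors, f d = ∑ a ∈ m.divisors, ∑ b ∈ n.divisors, f (a * b) := by
  rw [Nat.divisors_mul, Finset.mul_def, sum_image h.mul_injOn_divisors, sum_product]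

theorem Nat.Prime.card_divisors_pow {p : ℕ} (hp : p.Prime) (k : ℕ) : #(p ^ k).divisors = k + 1 := by
  rw [← ArithmeticFunction.sigma_zero_apply, ArithmeticFunction.sigma_zero_apply_prime_pow hp]

theorem Nat.sum_range_min_add_sub_two_mul (i j : ℕ) :
    ∑ k ∈ range (min i j + 1), (i + j - 2 * k + 1) = (i + 1) * (j + 1) := by
  induction i generalizing j with
  | zero => simp
  | succ i ih =>
    cases j with
    | zero => simp
    | succ j =>
      have shift : ∀ k, i + 1 + (j + 1) - 2 * (k + 1) + 1 = i + j - 2 * k + 1 := fun k => by omega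
      rw [Nat.add_min_add_right, sum_range_succ']
      simp only [shift, ih, mul_zero, Nat.sub_zero]
      ring

theorem Nat.induction_on_pair_prime_pow_coprime {P : ℕ → ℕ → Prop}
    (prime_pow : ∀ p i j, p.Prime → P (p ^ i) (p ^ j))
    (mul : ∀ m₁ n₁ m₂ n₂, Coprime (m₁ * n₁) (m₂ * n₂) → P m₁ n₁ → P m₂ n₂ →
      P (m₁ * m₂) (n₁ * n₂))
    {m n : ℕ} (hm : m ≠ 0) (hn : n ≠ 0) : P m n := by
  induction hk : m * n using Nat.strong_induction_on generalizing m n with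
  | _ k ih =>
    subst hk
    rcases eq_or_ne (m * n) 1 with h1 | h1
    · obtain ⟨rfl, rfl⟩ := mul_eq_one.mp h1
      simpa using prime_pow 2 0 0 Nat.prime_two
    set p := (m * n).minFac
    have hp : p.Prime := minFac_prime h1
    have hmn : m * n ≠ 0 := mul_ne_zero hm hn
    have cop : Coprime (ordProj[p] m * ordProj[p] n) (ordCompl[p] m * ordCompl[p] n) := by
      rw [← pow_add, ← ordCompl_mul]
      exact (coprime_ordCompl hp hmn).pow_left _
    have lt : ordCompl[p] m * ordCompl[p] n < m * n := by
      rw [← ordCompl_mul]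
      refine (ordCompl_le _ _).lt_of_ne ?_
      rw [ne_eq, ordCompl_eq_self_iff_zero_or_not_dvd _ hp, not_or, not_not]
      exact ⟨hmn, minFac_dvd _⟩
    have := mul _ _ _ _ cop (prime_pow p _ _ hp)
      (ih _ lt (ordCompl_pos p hm).ne' (ordCompl_pos p hn).ne' rfl)
    rwa [ordProj_mul_ordCompl_eq_self, ordProj_mul_ordCompl_eq_self] at this

def buscheRamanujanSum (m n : ℕ) : ℕ :=
  ∑ a ∈ (Nat.gcd m n).divisors, #(m * n / a ^ 2).divisors

theorem buscheRamanujanSum_mul {m₁ n₁ m₂ n₂ : ℕ} (h : Nat.Coprime (m₁ * n₁) (m₂ * n₂)) :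
    buscheRamanujanSum (m₁ * m₂) (n₁ * n₂) =
      buscheRamanujanSum m₁ n₁ * buscheRamanujanSum m₂ n₂ := by
  have hg : Nat.Coprime (Nat.gcd m₁ n₁) (Nat.gcd m₂ n₂) :=
    (h.coprime_dvd_left ((Nat.gcd_dvd_left _ _).mul_right _)).coprime_dvd_right
      ((Nat.gcd_dvd_left _ _).mul_right _)
  unfold buscheRamanujanSum
  rw [h.gcd_mul_mul, hg.sum_divisors_mul_eq_sum_sum, sum_mul_sum]
  refine sum_congr rfl fun a ha => sum_congr rfl fun b hb => ?_
  have ha2 := Nat.sq_dvd_mul_of_dvd_gcd (Nat.dvd_of_mem_divisors ha)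
  have hb2 := Nat.sq_dvd_mul_of_dvd_gcd (Nat.dvd_of_mem_divisors hb)
  have hab : Nat.Coprime (m₁ * n₁ / a ^ 2) (m₂ * n₂ / b ^ 2) :=
    (h.coprime_dvd_left (Nat.div_dvd_of_dvd ha2)).coprime_dvd_right (Nat.div_dvd_of_dvd hb2)
  rw [mul_mul_mul_comm, mul_pow, ← Nat.div_mul_div_comm ha2 hb2, hab.card_divisors_mul]

theorem buscheRamanujanSum_prime_pow {p : ℕ} (hp : p.Prime) (i j : ℕ) :
    buscheRamanujanSum (p ^ i) (p ^ j) = (i + 1) * (j + 1) := by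
  rw [buscheRamanujanSum, Nat.gcd_pow_pow, Nat.sum_divisors_prime_pow hp,
    ← Nat.sum_range_min_add_sub_two_mul]
  refine sum_congr rfl fun k hk => ?_
  have hk : k * 2 ≤ i + j := by rw [mem_range] at hk; omega
  rw [← pow_add, ← pow_mul, Nat.pow_div hk hp.pos, hp.card_divisors_pow, mul_comm k]

theorem busche_ramanujan_divisor_count_prod (m n : ℕ) (hm : 0 < m) (hn : 0 < n) :
    m.divisors.card * n.divisors.card =
      ∑ a ∈ (Nat.gcd m n).divisors, (m * n / a ^ 2).divisors.card := by
  refine Nat.induction_on_pair_prime_pow_coprime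
    (P := fun m n => #m.divisors * #n.divisors = buscheRamanujanSum m n) ?_ ?_ hm.ne' hn.ne'
  · intro p i j hp
    rw [buscheRamanujanSum_prime_pow hp, hp.card_divisors_pow, hp.card_divisors_pow]
  · intro m₁ n₁ m₂ n₂ h ih₁ ih₂
    rw [buscheRamanujanSum_mul h, ← ih₁, ← ih₂,
      h.coprime_mul_right.coprime_mul_right_right.card_divisors_mul,
      h.coprime_mul_left.coprime_mul_left_right.card_divisors_mul]
    ring
end

section
/- For the sum-of-divisors function σ and all positive integers m, n: σ(m) σ(n) = ∑_{a | gcd(m,n)} σ(mn/a²) a. -/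
open Finset ArithmeticFunction
open scoped ArithmeticFunction.sigma

/-!
Expanding the product, `σ_k(m) σ_k(n) = ∑_{a ∣ m, b ∣ n} (ab)^k`. The pairs `(a, b)` with
`a ∣ m`, `b ∣ n` correspond bijectively, with `ab = de`, to the pairs `(d, e)` with
`d ∣ gcd(m, n)`, `e ∣ mn/d²`: take `d = gcd(a, n/b)`, `e = ab/d`, and conversely
`b = gcd(e, n/d)`, `a = de/b`. Writing `a = d a'`, `n/b = d c'` with `a'`, `c'` coprime gives
`e = a' b` and `n/d = c' b`, whence `gcd(e, n/d) = b`.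
-/

namespace BuscheRamanujan

def forward (n : ℕ) (p : ℕ × ℕ) : Σ _ : ℕ, ℕ :=
  ⟨Nat.gcd p.1 (n / p.2), p.1 * p.2 / Nat.gcd p.1 (n / p.2)⟩

def backward (n : ℕ) (q : Σ _ : ℕ, ℕ) : ℕ × ℕ :=
  (q.1 * q.2 / Nat.gcd q.2 (n / q.1), Nat.gcd q.2 (n / q.1))

variable {m n : ℕ}

theorem forward_mem_and_backward_forward {p : ℕ × ℕ} (hp : p ∈ m.divisors ×ˢ n.divisors) :
    forward n p ∈ (Nat.gcd m n).divisors.sigma (fun d => (m * n / d ^ 2).divisors) ∧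
      backward n (forward n p) = p := by
  obtain ⟨a, b⟩ := p
  simp only [mem_product, Nat.mem_divisors] at hp
  obtain ⟨⟨⟨k, rfl⟩, hm⟩, ⟨c, rfl⟩, hn⟩ := hp
  have hb : 0 < b := Nat.pos_of_ne_zero (left_ne_zero_of_mul hn)
  have hc : 0 < c := Nat.pos_of_ne_zero (right_ne_zero_of_mul hn)
  obtain ⟨g, a', c', hg, hco, rfl, rfl⟩ := Nat.exists_coprime' (Nat.gcd_pos_of_pos_right a hc)
  have hgcd : Nat.gcd (a' * g) (c' * g) = g := by rw [Nat.gcd_mul_right, hco.gcd_eq_one, one_mul]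
  have hn_div_b : b * (c' * g) / b = c' * g := Nat.mul_div_cancel_left _ hb
  have he : a' * g * b / g = a' * b := Nat.div_eq_of_eq_mul_left hg (by ring)
  have hmn : a' * g * k * (b * (c' * g)) / g ^ 2 = a' * k * (b * c') :=
    Nat.div_eq_of_eq_mul_left (pow_pos hg 2) (by ring)
  have hn_div_g : b * (c' * g) / g = c' * b := Nat.div_eq_of_eq_mul_left hg (by ring)
  simp only [forward, backward, hn_div_b, hgcd, he, hn_div_g, Nat.gcd_mul_right, hco.gcd_eq_one,
    one_mul, mem_sigma, Nat.mem_divisors, hmn]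
  refine ⟨⟨⟨Nat.dvd_gcd ?_ ?_, Nat.gcd_ne_zero_left hm⟩, ⟨k * c', by ring⟩, ?_⟩, ?_⟩
  · exact ⟨a' * k, by ring⟩
  · exact ⟨b * c', by ring⟩
  · simp_all
  · rw [Prod.mk.injEq]
    exact ⟨Nat.div_eq_of_eq_mul_left hb (by ring), rfl⟩

theorem backward_mem_and_forward_backward {q : Σ _ : ℕ, ℕ}
    (hq : q ∈ (Nat.gcd m n).divisors.sigma (fun d => (m * n / d ^ 2).divisors)) :
    backward n q ∈ m.divisors ×ˢ n.divisors ∧ forward n (backward n q) = q := by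
  obtain ⟨d, e⟩ := q
  simp only [mem_sigma, Nat.mem_divisors, Nat.dvd_gcd_iff] at hq
  obtain ⟨⟨⟨⟨k, rfl⟩, ⟨c, rfl⟩⟩, -⟩, he, hmn⟩ := hq
  have hd : 0 < d := Nat.pos_of_ne_zero fun h => by simp [h] at hmn
  have hmn' : d * k * (d * c) / d ^ 2 = k * c := Nat.div_eq_of_eq_mul_left (pow_pos hd 2) (by ring)
  rw [hmn'] at he hmn
  have he0 : 0 < e := Nat.pos_of_ne_zero (ne_zero_of_dvd_ne_zero hmn he)
  have hn_div_d : d * c / d = c := Nat.mul_div_cancel_left _ hd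
  obtain ⟨g, e', c', hg, hco, rfl, rfl⟩ := Nat.exists_coprime' (Nat.gcd_pos_of_pos_left c he0)
  have hgcd : Nat.gcd (e' * g) (c' * g) = g := by rw [Nat.gcd_mul_right, hco.gcd_eq_one, one_mul]
  have ha : d * (e' * g) / g = d * e' := Nat.div_eq_of_eq_mul_left hg (by ring)
  have hn_div_g : d * (c' * g) / g = d * c' := Nat.div_eq_of_eq_mul_left hg (by ring)
  have he'k : e' ∣ k := by
    refine hco.dvd_of_dvd_mul_right (Nat.dvd_of_mul_dvd_mul_right hg ?_)
    simpa [mul_assoc] using he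
  simp only [forward, backward, hn_div_d, hgcd, ha, hn_div_g, Nat.gcd_mul_left, hco.gcd_eq_one,
    mul_one, mem_product, Nat.mem_divisors]
  refine ⟨⟨⟨mul_dvd_mul_left d he'k, ?_⟩, ⟨d * c', by ring⟩, ?_⟩, ?_⟩
  · exact mul_ne_zero hd.ne' (left_ne_zero_of_mul hmn)
  · exact mul_ne_zero hd.ne' (right_ne_zero_of_mul hmn)
  · rw [Sigma.mk.injEq]
    exact ⟨rfl, heq_of_eq (Nat.div_eq_of_eq_mul_left hd (by ring))⟩

theorem fst_mul_snd_forward (p : ℕ × ℕ) : (forward n p).1 * (forward n p).2 = p.1 * p.2 :=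
  Nat.mul_div_cancel' ((Nat.gcd_dvd_left _ _).trans (dvd_mul_right _ _))

end BuscheRamanujan

open BuscheRamanujan in
theorem Nat.sum_divisors_sum_divisors_mul {M : Type*} [AddCommMonoid M] (f : ℕ → M) (m n : ℕ) :
    ∑ a ∈ m.divisors, ∑ b ∈ n.divisors, f (a * b) =
      ∑ d ∈ (Nat.gcd m n).divisors, ∑ e ∈ (m * n / d ^ 2).divisors, f (d * e) := by
  rw [← sum_product' (f := fun a b => f (a * b)),
    sum_sigma' (f := fun d e => f (d * e))]
  exact sum_nbij' (forward n) (backward n)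
    (fun p hp => (forward_mem_and_backward_forward hp).1)
    (fun q hq => (backward_mem_and_forward_backward hq).1)
    (fun p hp => (forward_mem_and_backward_forward hp).2)
    (fun q hq => (backward_mem_and_forward_backward hq).2)
    (fun p _ => by rw [fst_mul_snd_forward])

theorem ArithmeticFunction.sigma_mul_sigma (k m n : ℕ) :
    σ k m * σ k n = ∑ d ∈ (Nat.gcd m n).divisors, σ k (m * n / d ^ 2) * d ^ k := by
  simp only [sigma_apply]
  rw [sum_mul_sum]
  simp only [← mul_pow]
  rw [Nat.sum_divisors_sum_divisors_mul (· ^ k)]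
  simp only [mul_pow, mul_comm, mul_sum]

theorem busche_ramanujan_sigma_prod_general (m n : ℕ) :
    ArithmeticFunction.sigma 1 m * ArithmeticFunction.sigma 1 n =
      ∑ a ∈ (Nat.gcd m n).divisors, ArithmeticFunction.sigma 1 (m * n / a ^ 2) * a := by
  simpa using sigma_mul_sigma 1 m n

theorem busche_ramanujan_sigma_prod (m n : ℕ) (hm : 0 < m) (hn : 0 < n) :
    ArithmeticFunction.sigma 1 m * ArithmeticFunction.sigma 1 n =
      ∑ a ∈ (Nat.gcd m n).divisors, ArithmeticFunction.sigma 1 (m * n / a ^ 2) * a :=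
  busche_ramanujan_sigma_prod_general m n
end

section
/- For every k ∈ ℂ and all positive integers m, n: σ_k(mn) = ∑_{a | gcd(m,n)} σ_k(m/a) σ_k(n/a) μ(a) a^k, where σ_k(n) = ∑_{d | n} d^k. -/
/-!
The identity holds for every completely multiplicative `f` in place of `d ↦ d ^ k`. Writing
`f a * f d * f e = f (a * d * e)` and substituting `d ↦ a * d`, the right-hand side becomes
`∑_{d ∣ m, e ∣ n} f (d * e) ∑_{a ∣ gcd(d, n / e)} μ a`, the sum of `f (d * e)` over the pairs with
`d` coprime to `n / e`. These pairs correspond bijectively to the divisors `D` of `m * n` through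
`D ↦ (D / gcd(D, n), gcd(D, n))`, because `gcd(d * e, n) = e * gcd(d, n / e)`.
-/

/-- The generalized sum-of-divisors function with complex exponent `k`. -/
noncomputable def sigmaC (k : ℂ) (n : ℕ) : ℂ := ∑ d ∈ n.divisors, (d : ℂ) ^ k

open Finset ArithmeticFunction
open scoped ArithmeticFunction.Moebius

namespace Nat

lemma gcd_mul_eq_of_coprime_div {d e n : ℕ} (he : e ∣ n) (h : Coprime d (n / e)) :
    gcd (d * e) n = e := by
  conv_lhs => rw [← Nat.div_mul_cancel he]
  rw [Nat.gcd_mul_right, h.gcd_eq_one, one_mul]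

lemma div_gcd_dvd_of_dvd_mul {D m n : ℕ} (hn : n ≠ 0) (hD : D ∣ m * n) :
    D / gcd D n ∣ m := by
  have hg : 0 < gcd D n := Nat.gcd_pos_of_pos_right _ (Nat.pos_of_ne_zero hn)
  refine (coprime_div_gcd_div_gcd hg).dvd_of_dvd_mul_right ?_
  rw [← Nat.mul_div_assoc m (gcd_dvd_right D n)]
  exact Nat.div_dvd_div (gcd_dvd_left D n) hD

lemma sum_divisors_mul_eq_sum_coprime_s6 {M : Type*} [AddCommMonoid M] {m n : ℕ} (hm : m ≠ 0)
    (hn : n ≠ 0) (g : ℕ → M) :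
    ∑ D ∈ (m * n).divisors, g D =
      ∑ d ∈ m.divisors, ∑ e ∈ n.divisors, if Coprime d (n / e) then g (d * e) else 0 := by
  rw [← sum_product' (f := fun d e => if Coprime d (n / e) then g (d * e) else 0), ← sum_filter]
  refine sum_nbij' (fun D => (D / gcd D n, gcd D n)) (fun p => p.1 * p.2) ?_ ?_ ?_ ?_ ?_
  · intro D hD
    simp only [mem_filter, mem_product, mem_divisors] at hD ⊢
    have hg : 0 < gcd D n := Nat.gcd_pos_of_pos_right _ (Nat.pos_of_ne_zero hn)
    refine ⟨⟨⟨div_gcd_dvd_of_dvd_mul hn hD.1, hm⟩, gcd_dvd_right D n, hn⟩, ?_⟩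
    simpa using coprime_div_gcd_div_gcd hg
  · rintro ⟨d, e⟩ hde
    simp only [mem_filter, mem_product, mem_divisors] at hde ⊢
    exact ⟨mul_dvd_mul hde.1.1.1 hde.1.2.1, mul_ne_zero hm hn⟩
  · intro D _
    exact Nat.div_mul_cancel (gcd_dvd_left D n)
  · rintro ⟨d, e⟩ hde
    simp only [mem_filter, mem_product, mem_divisors] at hde
    have hg := gcd_mul_eq_of_coprime_div hde.1.2.1 hde.2
    have he : 0 < e := Nat.pos_of_dvd_of_pos hde.1.2.1 (Nat.pos_of_ne_zero hn)
    simp [hg, Nat.mul_div_cancel _ he]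
  · intro D _
    rw [Nat.div_mul_cancel (gcd_dvd_left D n)]

lemma divisors_div_eq_filter {a n : ℕ} (ha : a ∣ n) :
    (n / a).divisors = n.divisors.filter (fun e => a ∣ n / e) := by
  rcases eq_or_ne n 0 with rfl | hn
  · simp
  have hna : n / a ≠ 0 := fun h => hn (by rw [← Nat.div_mul_cancel ha, h, zero_mul])
  ext e
  simp only [mem_divisors, mem_filter, ne_eq, hn, hna, not_false_eq_true, and_true,
    Nat.dvd_div_iff_mul_dvd ha]
  constructor
  · intro h
    have he : e ∣ n := (dvd_mul_left e a).trans h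
    exact ⟨he, (Nat.dvd_div_iff_mul_dvd he).2 (by rwa [mul_comm])⟩
  · rintro ⟨he, h⟩
    rw [mul_comm]
    exact (Nat.dvd_div_iff_mul_dvd he).1 h

lemma sum_divisors_filter_dvd {M : Type*} [AddCommMonoid M] {a m : ℕ} (ha : a ∣ m)
    (g : ℕ → M) :
    ∑ d ∈ m.divisors with a ∣ d, g d = ∑ d ∈ (m / a).divisors, g (a * d) := by
  rcases eq_or_ne m 0 with rfl | hm
  · simp
  have ha0 : 0 < a := Nat.pos_of_dvd_of_pos ha (Nat.pos_of_ne_zero hm)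
  have hma : m / a ≠ 0 := fun h => hm (by rw [← Nat.div_mul_cancel ha, h, zero_mul])
  refine sum_nbij' (· / a) (a * ·) ?_ ?_ ?_ ?_ ?_
  · intro d hd
    simp only [mem_filter, mem_divisors] at hd ⊢
    exact ⟨Nat.div_dvd_div hd.2 hd.1.1, hma⟩
  · intro d hd
    simp only [mem_filter, mem_divisors] at hd ⊢
    exact ⟨⟨(Nat.dvd_div_iff_mul_dvd ha).1 hd.1, hm⟩, dvd_mul_right a d⟩
  · intro d hd
    simp only [mem_filter, mem_divisors] at hd
    exact Nat.mul_div_cancel' hd.2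
  · intro d _
    exact Nat.mul_div_cancel_left d ha0
  · intro d hd
    simp only [mem_filter] at hd
    rw [Nat.mul_div_cancel' hd.2]

end Nat

lemma ArithmeticFunction.sum_divisors_moebius_s6 {R : Type*} [Ring R] (n : ℕ) :
    ∑ d ∈ n.divisors, (μ d : R) = if n = 1 then 1 else 0 := by
  have h := congrArg (· n) (coe_moebius_mul_coe_zeta (R := R))
  simp only [coe_mul_zeta_apply, intCoe_apply, one_apply] at h
  exact h

theorem sum_divisors_mul_eq_sum_moebius {R : Type*} [CommRing R] (f : ℕ → R)
    (hf : ∀ a b, f (a * b) = f a * f b) (m n : ℕ) :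
    ∑ D ∈ (m * n).divisors, f D = ∑ a ∈ (Nat.gcd m n).divisors,
      (∑ d ∈ (m / a).divisors, f d) * (∑ e ∈ (n / a).divisors, f e) * (μ a : R) * f a := by
  rcases eq_or_ne m 0 with rfl | hm
  · simp
  rcases eq_or_ne n 0 with rfl | hn
  · simp
  symm
  calc ∑ a ∈ (Nat.gcd m n).divisors,
        (∑ d ∈ (m / a).divisors, f d) * (∑ e ∈ (n / a).divisors, f e) * (μ a : R) * f a
      = ∑ a ∈ (Nat.gcd m n).divisors, ∑ d ∈ m.divisors, ∑ e ∈ n.divisors,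
          if a ∣ d ∧ a ∣ n / e then (μ a : R) * f (d * e) else 0 := by
        refine sum_congr rfl fun a ha => ?_
        have hag : a ∣ Nat.gcd m n := Nat.dvd_of_mem_divisors ha
        have hsum_m : f a * ∑ d ∈ (m / a).divisors, f d =
            ∑ d ∈ m.divisors, if a ∣ d then f d else 0 := by
          rw [← sum_filter, Nat.sum_divisors_filter_dvd (hag.trans (Nat.gcd_dvd_left m n)),
            mul_sum]
          simp only [hf]
        have hsum_n : ∑ e ∈ (n / a).divisors, f e =
            ∑ e ∈ n.divisors, if a ∣ n / e then f e else 0 := by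
          rw [Nat.divisors_div_eq_filter (hag.trans (Nat.gcd_dvd_right m n)), sum_filter]
        rw [show ∀ x y z w : R, x * y * z * w = z * ((w * x) * y) by intros; ring, hsum_m, hsum_n,
          sum_mul_sum, mul_sum]
        refine sum_congr rfl fun d _ => ?_
        rw [mul_sum]
        refine sum_congr rfl fun e _ => ?_
        rw [ite_zero_mul_ite_zero, mul_ite, mul_zero, hf]
    _ = ∑ d ∈ m.divisors, ∑ e ∈ n.divisors, ∑ a ∈ (Nat.gcd d (n / e)).divisors,
          (μ a : R) * f (d * e) := by
        rw [sum_comm]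
        refine sum_congr rfl fun d hd => ?_
        rw [sum_comm]
        refine sum_congr rfl fun e he => ?_
        have hdvd : Nat.gcd d (n / e) ∣ Nat.gcd m n :=
          Nat.dvd_gcd ((Nat.gcd_dvd_left _ _).trans (Nat.dvd_of_mem_divisors hd))
            ((Nat.gcd_dvd_right _ _).trans (Nat.div_dvd_of_dvd (Nat.dvd_of_mem_divisors he)))
        simp_rw [← sum_filter, ← Nat.dvd_gcd_iff]
        rw [Nat.divisors_filter_dvd_of_dvd (Nat.gcd_ne_zero_left hm) hdvd]
    _ = ∑ d ∈ m.divisors, ∑ e ∈ n.divisors, if Nat.Coprime d (n / e) then f (d * e) else 0 := by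
        simp only [← sum_mul, ArithmeticFunction.sum_divisors_moebius_s6, ite_mul, one_mul, zero_mul,
          Nat.Coprime]
    _ = ∑ D ∈ (m * n).divisors, f D := (Nat.sum_divisors_mul_eq_sum_coprime_s6 hm hn f).symm

theorem busche_ramanujan_sigma_cpow_general (k : ℂ) (m n : ℕ) :
    sigmaC k (m * n) = ∑ a ∈ (Nat.gcd m n).divisors,
      sigmaC k (m / a) * sigmaC k (n / a) * (ArithmeticFunction.moebius a : ℂ) *
        (a : ℂ) ^ k :=
  sum_divisors_mul_eq_sum_moebius (fun d : ℕ => (d : ℂ) ^ k)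
    (fun a b => by rw [Nat.cast_mul, Complex.natCast_mul_natCast_cpow]) m n

theorem busche_ramanujan_sigma_cpow (k : ℂ) (m n : ℕ) (hm : 0 < m) (hn : 0 < n) :
    sigmaC k (m * n) = ∑ a ∈ (Nat.gcd m n).divisors,
      sigmaC k (m / a) * sigmaC k (n / a) * (ArithmeticFunction.moebius a : ℂ) *
        (a : ℂ) ^ k :=
  busche_ramanujan_sigma_cpow_general k m n
end

section
/- Let x_1,...,x_k be pairwise distinct elements of a field. Then for every d ≥ 0, the complete homogeneous symmetric polynomial satisfies h_d(x_1,...,x_k) = ∑_{i=1}^{k} x_i^{d+k-1} ∏_{j≠i} (x_i − x_j)^{-1}. -/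
/-!
Both sides are coefficients of the generating function `∏ i, 1 / (1 - x i t)`. Substituting
`t⁻¹` for `X` in the Lagrange identity `∑ i, ∏ j ≠ i, (X - x j) / (x i - x j) = 1` gives the
partial fraction decomposition
`t ^ (k - 1) / ∏ j, (1 - x j t) = ∑ i, (∏ j ≠ i, (x i - x j)⁻¹) / (1 - x i t)`,
and comparing the coefficients of `t ^ (d + k - 1)` proves the formula.
-/

/-- Complete homogeneous symmetric polynomial of degree `d` evaluated at `x`. -/
def hsymmVal {R : Type*} [CommRing R] {k : ℕ} (x : Fin k → R) (d : ℕ) : R :=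
  ∑ ν ∈ (Fintype.piFinset fun _ : Fin k => Finset.range (d + 1)).filter
      (fun ν => ∑ i, ν i = d), ∏ i, x i ^ ν i

open Finset

namespace Polynomial

variable {R ι : Type*}

theorem reflect_sum [Semiring R] (N : ℕ) (s : Finset ι) (f : ι → R[X]) :
    reflect N (∑ i ∈ s, f i) = ∑ i ∈ s, reflect N (f i) := by
  classical
  induction s using Finset.induction_on with
  | empty => simp [reflect_zero]
  | insert a s ha ih => rw [sum_insert ha, sum_insert ha, reflect_add, ih]

theorem reflect_prod [CommSemiring R] (s : Finset ι) (f : ι → R[X]) (N : ι → ℕ)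
    (hf : ∀ i ∈ s, (f i).natDegree ≤ N i) :
    reflect (∑ i ∈ s, N i) (∏ i ∈ s, f i) = ∏ i ∈ s, reflect (N i) (f i) := by
  classical
  induction s using Finset.induction_on with
  | empty => simp [reflect_one]
  | insert a s ha ih =>
    have hprod : (∏ i ∈ s, f i).natDegree ≤ ∑ i ∈ s, N i :=
      (natDegree_prod_le _ _).trans (sum_le_sum fun i hi => hf i (mem_insert_of_mem hi))
    rw [sum_insert ha, prod_insert ha, prod_insert ha,
      reflect_mul _ _ (hf a (mem_insert_self a s)) hprod,
      ih fun i hi => hf i (mem_insert_of_mem hi)]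

end Polynomial

namespace Lagrange

open Polynomial

variable {F ι : Type*} [Field F]

theorem reflect_basisDivisor (x y : F) :
    reflect 1 (basisDivisor x y) = C (x - y)⁻¹ * (1 - C y * X) := by
  rw [basisDivisor, reflect_C_mul, reflect_sub, reflect_one_X, reflect_C, pow_one]

theorem natDegree_basisDivisor_le (x y : F) : (basisDivisor x y).natDegree ≤ 1 :=
  (natDegree_C_mul_le _ _).trans (natDegree_X_sub_C_le _)

theorem sum_prod_erase_one_sub_C_mul_X [DecidableEq ι] {s : Finset ι} {v : ι → F}
    (hvs : Set.InjOn v s) (hs : s.Nonempty) :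
    ∑ i ∈ s, ∏ j ∈ s.erase i, C (v i - v j)⁻¹ * (1 - C (v j) * X) = X ^ (#s - 1) := by
  have h := congrArg (reflect (#s - 1)) (sum_basis hvs hs)
  rw [reflect_sum, reflect_one] at h
  rw [← h]
  refine sum_congr rfl fun i hi => ?_
  have hcard : #s - 1 = ∑ j ∈ s.erase i, 1 := by
    rw [sum_const, card_erase_of_mem hi, smul_eq_mul, mul_one]
  rw [Lagrange.basis, hcard, reflect_prod _ _ _ fun j _ => natDegree_basisDivisor_le _ _]
  simp only [reflect_basisDivisor]

end Lagrange

namespace PowerSeries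

theorem one_sub_C_mul_X_mul_mk_pow {R : Type*} [CommRing R] (a : R) :
    (1 - C a * X) * mk (a ^ ·) = 1 := by
  rw [mul_comm]
  simpa only [map_mul, map_sub, map_one, rescale_X, rescale_mk, Pi.one_apply, mul_one] using
    congrArg (rescale a) (mk_one_mul_one_sub_eq_one (S := R))

theorem X_pow_mul_prod_mk_pow {K ι : Type*} [Field K] [DecidableEq ι] {s : Finset ι}
    {v : ι → K} (hvs : Set.InjOn v s) (hs : s.Nonempty) :
    X ^ (#s - 1) * ∏ j ∈ s, mk (v j ^ ·) =
      ∑ i ∈ s, C (∏ j ∈ s.erase i, (v i - v j)⁻¹) * mk (v i ^ ·) := by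
  have h := congrArg Polynomial.coeToPowerSeries.ringHom
    (Lagrange.sum_prod_erase_one_sub_C_mul_X hvs hs)
  simp only [map_sum, map_prod, map_mul, map_sub, map_one, map_pow,
    Polynomial.coeToPowerSeries.ringHom_apply, Polynomial.coe_C, Polynomial.coe_X] at h
  rw [← h, sum_mul]
  refine sum_congr rfl fun i hi => ?_
  calc _ = C (∏ j ∈ s.erase i, (v i - v j)⁻¹) * mk (v i ^ ·) *
        ∏ j ∈ s.erase i, (1 - C (v j) * X) * mk (v j ^ ·) := by
        rw [← mul_prod_erase s _ hi, prod_mul_distrib, prod_mul_distrib, map_prod]; ring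
    _ = _ := by simp only [one_sub_C_mul_X_mul_mk_pow, prod_const_one, mul_one]

end PowerSeries

theorem hsymmVal_eq_coeff_prod_mk_pow {R : Type*} [CommRing R] {k : ℕ} (x : Fin k → R)
    (d : ℕ) :
    hsymmVal x d = PowerSeries.coeff d (∏ i, PowerSeries.mk (x i ^ ·)) := by
  have hsupp : (Fintype.piFinset fun _ : Fin k => range (d + 1)).filter (fun ν => ∑ i, ν i = d)
      = piAntidiag univ d := by
    ext ν
    simp only [mem_filter, Fintype.mem_piFinset, mem_range, mem_piAntidiag, mem_univ,
      implies_true, and_true, and_iff_right_iff_imp]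
    rintro rfl i
    exact Nat.lt_succ_of_le (single_le_sum (fun j _ => Nat.zero_le _) (mem_univ i))
  rw [PowerSeries.coeff_prod, finsuppAntidiag, sum_map, hsymmVal, hsupp, ← sum_attach]
  simp

theorem hsymm_lagrange {K : Type*} [Field K] {k : ℕ} (hk : 0 < k) (x : Fin k → K)
    (hx : Function.Injective x) (d : ℕ) :
    hsymmVal x d = ∑ i : Fin k, x i ^ (d + k - 1) *
      ∏ j ∈ Finset.univ.erase i, (x i - x j)⁻¹ := by
  have key := congrArg (PowerSeries.coeff (d + (k - 1)))
    (PowerSeries.X_pow_mul_prod_mk_pow hx.injOn ⟨⟨0, hk⟩, mem_univ _⟩)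
  rw [card_univ, Fintype.card_fin, PowerSeries.coeff_X_pow_mul', if_pos (Nat.le_add_left _ _),
    Nat.add_sub_cancel, ← hsymmVal_eq_coeff_prod_mk_pow, map_sum] at key
  refine key.trans (sum_congr rfl fun i _ => ?_)
  rw [PowerSeries.coeff_C_mul, PowerSeries.coeff_mk, Nat.add_sub_assoc hk, mul_comm]
end

section
/- Let g and h be completely multiplicative arithmetic functions, f = g * h, and r ≥ 1. Define the multiplicative function ψ_f of r variables by: ψ_f(p^{ν_1},...,p^{ν_r}) = 1 if all ν_i = 0; ψ_f(p^{ν_1},...,p^{ν_r}) = (−1)^{j−1} g(p) h(p) f(p^{j−2}) if all ν_i ∈ {0,1} and j := ν_1 + ... + ν_r ≥ 2; and ψ_f(p^{ν_1},...,p^{ν_r}) = 0 otherwise. Then for all positive integers n_1,...,n_r: f(n_1 ··· n_r) = ∑_{a_1 | n_1, ..., a_r | n_r} f(n_1/a_1) ··· f(n_r/a_r) ψ_f(a_1,...,a_r). -/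
/-!
Both sides are multiplicative in the tuple `n`: for coprime `u`, `v` every divisor of `u * v`
splits uniquely into a divisor of `u` times a divisor of `v`. So it suffices to take
`n i = p ^ e i`. Put `x = g p`, `y = h p`; then `(x - y) f (p ^ k) = x ^ (k + 1) - y ^ (k + 1)`
and, on `0/1`-tuples `ν`, `(x - y) ψ (p ^ ν) = x (-y) ^ |ν| - y (-x) ^ |ν|`. After multiplication
by `(x - y) ^ (r + 1)` the prime-power identity becomes `x ∏ᵢ Aᵢ - y ∏ᵢ Bᵢ`, where the two-term
sums `Aᵢ`, `Bᵢ` collapse to `x ^ eᵢ (x - y)` and `y ^ eᵢ (x - y)`. Cancelling `(x - y) ^ (r + 1)`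
is legitimate for the generic pair `x = X₀`, `y = X₁` in `ℤ[X₀, X₁]`, which specialises to every
`x`, `y`.
-/

open Finset

namespace BuscheRamanujan

section GeomSum

variable {R S : Type*} [CommSemiring R] [CommSemiring S]

def geomSum₂ (x y : R) (n : ℕ) : R := ∑ i ∈ range n, x ^ i * y ^ (n - 1 - i)

theorem map_geomSum₂ (φ : R →+* S) (x y : R) (n : ℕ) :
    φ (geomSum₂ x y n) = geomSum₂ (φ x) (φ y) n := by
  simp [geomSum₂]

theorem geomSum₂_mul_sub {R : Type*} [CommRing R] (x y : R) (n : ℕ) :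
    geomSum₂ x y n * (x - y) = x ^ n - y ^ n :=
  geom_sum₂_mul x y n

end GeomSum

section Algebra

variable {R S : Type*} [CommRing R] [CommRing S] {ι : Type*} [Fintype ι]

/-- `ψ_f (p ^ ν₁, …, p ^ ν_r)` for `x = g p`, `y = h p`, as `f (p ^ k) = geomSum₂ x y (k + 1)`. -/
def psiLocal (x y : R) (ν : ι → ℕ) : R :=
  if ∀ i, ν i = 0 then 1
  else if (∀ i, ν i ≤ 1) ∧ 2 ≤ ∑ i, ν i then
    (-1) ^ (∑ i, ν i - 1) * x * y * geomSum₂ x y (∑ i, ν i - 2 + 1)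
  else 0

theorem map_psiLocal (φ : R →+* S) (x y : R) (ν : ι → ℕ) :
    φ (psiLocal x y ν) = psiLocal (φ x) (φ y) ν := by
  unfold psiLocal
  split_ifs <;> simp [map_geomSum₂]

theorem psiLocal_mul_sub (x y : R) (ν : ι → ℕ) :
    psiLocal x y ν * (x - y) =
      x * ∏ i, (if ν i ≤ 1 then (-y) ^ ν i else 0) -
        y * ∏ i, (if ν i ≤ 1 then (-x) ^ ν i else 0) := by
  rw [Fintype.prod_ite_zero, Fintype.prod_ite_zero, psiLocal]
  by_cases hle : ∀ i, ν i ≤ 1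
  · have hzero : (∀ i, ν i = 0) ↔ ∑ i, ν i = 0 := by simp [sum_eq_zero_iff]
    simp only [hzero, hle, implies_true, true_and, if_true, prod_pow_eq_pow_sum]
    rcases ∑ i, ν i with _ | _ | k
    · simp
    · rw [if_neg (by omega), if_neg (by omega)]
      ring
    · rw [if_neg (by omega), if_pos (by omega), show k + 1 + 1 - 2 + 1 = k + 1 by omega,
        Nat.add_sub_cancel]
      linear_combination (-1) ^ (k + 1) * x * y * geomSum₂_mul_sub x y (k + 1)
  · have hzero : ¬∀ i, ν i = 0 := fun h => hle fun i => (h i).le.trans zero_le_one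
    simp [hle, hzero]

theorem sum_range_sub_pow_mul_ite (x y z : R) (e : ℕ) :
    ∑ k ∈ range (e + 1),
        (x ^ (e - k + 1) - y ^ (e - k + 1)) * (if k ≤ 1 then (-z) ^ k else 0) =
      x ^ (e + 1) - y ^ (e + 1) - z * (x ^ e - y ^ e) := by
  cases e with
  | zero => simp
  | succ e =>
    rw [sum_range_succ', sum_range_succ', sum_eq_zero fun k _ => by simp]
    simp only [zero_add, add_tsub_cancel_right, le_refl, ↓reduceIte, pow_one, tsub_zero, zero_le,
      pow_zero, mul_one]
    ring

variable [DecidableEq ι]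

theorem sum_prod_geomSum₂_mul_psiLocal_of_ne [IsDomain R] {x y : R} (hxy : x ≠ y)
    (e : ι → ℕ) :
    ∑ μ ∈ Fintype.piFinset fun i => range (e i + 1),
        (∏ i, geomSum₂ x y (e i - μ i + 1)) * psiLocal x y μ =
      geomSum₂ x y (∑ i, e i + 1) := by
  refine mul_right_cancel₀ (pow_ne_zero (Fintype.card ι + 1) (sub_ne_zero.2 hxy)) ?_
  have hterm (μ : ι → ℕ) : (∏ i, geomSum₂ x y (e i - μ i + 1)) * psiLocal x y μ *
      (x - y) ^ (Fintype.card ι + 1) =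
        x * ∏ i, (x ^ (e i - μ i + 1) - y ^ (e i - μ i + 1)) *
          (if μ i ≤ 1 then (-y) ^ μ i else 0) -
        y * ∏ i, (x ^ (e i - μ i + 1) - y ^ (e i - μ i + 1)) *
          (if μ i ≤ 1 then (-x) ^ μ i else 0) := by
    calc _ = (∏ i, geomSum₂ x y (e i - μ i + 1) * (x - y)) * (psiLocal x y μ * (x - y)) := by
          rw [prod_mul_distrib, prod_const, card_univ]; ring
      _ = _ := by simp only [geomSum₂_mul_sub, psiLocal_mul_sub, prod_mul_distrib]; ring
  calc _ = x * ∏ i, ∑ k ∈ range (e i + 1), (x ^ (e i - k + 1) - y ^ (e i - k + 1)) *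
            (if k ≤ 1 then (-y) ^ k else 0) -
          y * ∏ i, ∑ k ∈ range (e i + 1), (x ^ (e i - k + 1) - y ^ (e i - k + 1)) *
            (if k ≤ 1 then (-x) ^ k else 0) := by
        rw [prod_univ_sum, prod_univ_sum, mul_sum, mul_sum, ← sum_sub_distrib, sum_mul]
        exact sum_congr rfl fun μ _ => hterm μ
    _ = x * ∏ i, (x ^ e i * (x - y)) - y * ∏ i, (y ^ e i * (x - y)) := by
        simp only [sum_range_sub_pow_mul_ite]
        congr 2 <;> refine prod_congr rfl fun i _ => ?_ <;> ring
    _ = _ := by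
        simp only [prod_mul_distrib, prod_pow_eq_pow_sum, prod_const, card_univ]
        linear_combination (-(x - y) ^ Fintype.card ι) * geomSum₂_mul_sub x y (∑ i, e i + 1)

theorem sum_prod_geomSum₂_mul_psiLocal (x y : R) (e : ι → ℕ) :
    ∑ μ ∈ Fintype.piFinset fun i => range (e i + 1),
        (∏ i, geomSum₂ x y (e i - μ i + 1)) * psiLocal x y μ =
      geomSum₂ x y (∑ i, e i + 1) := by
  have hX : (MvPolynomial.X 0 : MvPolynomial (Fin 2) ℤ) ≠ MvPolynomial.X 1 :=
    (MvPolynomial.X_injective (R := ℤ)).ne (by decide)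
  have h := congrArg (MvPolynomial.eval₂Hom (Int.castRingHom R) ![x, y])
    (sum_prod_geomSum₂_mul_psiLocal_of_ne hX e)
  simp only [map_sum, map_mul, map_prod, map_geomSum₂, map_psiLocal,
    MvPolynomial.eval₂Hom_X'] at h
  simpa using h

end Algebra

section Divisors

variable {R : Type*} [CommSemiring R]

theorem sum_divisors_mul_of_coprime {m n : ℕ} (hmn : m.Coprime n) (F : ℕ → R) :
    ∑ d ∈ (m * n).divisors, F d = ∑ b ∈ m.divisors, ∑ c ∈ n.divisors, F (b * c) := by
  rw [Nat.divisors_mul, mul_def, sum_image hmn.mul_injOn_divisors, sum_product]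

variable {ι : Type*} [Fintype ι] [DecidableEq ι]

theorem sum_piFinset_divisors_mul {u v : ι → ℕ} (huv : ∀ i, (u i).Coprime (v i))
    (F : (ι → ℕ) → R) :
    ∑ a ∈ Fintype.piFinset (fun i => (u i * v i).divisors), F a =
      ∑ b ∈ Fintype.piFinset (fun i => (u i).divisors),
        ∑ c ∈ Fintype.piFinset (fun i => (v i).divisors), F (b * c) := by
  simp_rw [Nat.divisors_mul]
  rw [Fintype.piFinset_mul, mul_def, sum_image, sum_product]
  rintro ⟨b, c⟩ hbc ⟨b', c'⟩ hbc' h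
  simp only [coe_product, Set.mem_prod, mem_coe, Fintype.mem_piFinset] at hbc hbc'
  have hcoord (i : ι) : (b i, c i) = (b' i, c' i) :=
    (huv i).mul_injOn_divisors (mem_product.2 ⟨hbc.1 i, hbc.2 i⟩)
      (mem_product.2 ⟨hbc'.1 i, hbc'.2 i⟩) (congrFun h i)
  exact Prod.ext (funext fun i => (Prod.ext_iff.1 (hcoord i)).1)
    (funext fun i => (Prod.ext_iff.1 (hcoord i)).2)

def piDivisorSum (f : ℕ → R) (ψ : (ι → ℕ) → R) (n : ι → ℕ) : R :=
  ∑ a ∈ Fintype.piFinset fun i => (n i).divisors, (∏ i, f (n i / a i)) * ψ a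

theorem piDivisorSum_mul {f : ℕ → R} {ψ : (ι → ℕ) → R}
    (hf : ∀ m n, m.Coprime n → f (m * n) = f m * f n)
    (hψ : ∀ m n : ι → ℕ, Nat.gcd (∏ i, m i) (∏ i, n i) = 1 →
      ψ (fun i => m i * n i) = ψ m * ψ n)
    {u v : ι → ℕ} (huv : (∏ i, u i).Coprime (∏ i, v i)) :
    piDivisorSum f ψ (u * v) = piDivisorSum f ψ u * piDivisorSum f ψ v := by
  have hcop (i : ι) : (u i).Coprime (v i) :=
    (huv.coprime_dvd_left (dvd_prod_of_mem u (mem_univ i))).coprime_dvd_right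
      (dvd_prod_of_mem v (mem_univ i))
  rw [piDivisorSum, piDivisorSum, piDivisorSum, sum_mul_sum]
  refine (sum_piFinset_divisors_mul hcop _).trans <|
    sum_congr rfl fun b hb => sum_congr rfl fun c hc => ?_
  simp only [Fintype.mem_piFinset, Nat.mem_divisors] at hb hc
  have hψbc : ψ (b * c) = ψ b * ψ c := hψ b c <|
    (huv.coprime_dvd_left (prod_dvd_prod_of_dvd _ _ fun i _ => (hb i).1)).coprime_dvd_right
      (prod_dvd_prod_of_dvd _ _ fun i _ => (hc i).1)
  have hfbc (i : ι) : f (u i * v i / (b i * c i)) = f (u i / b i) * f (v i / c i) := by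
    rw [← Nat.div_mul_div_comm (hb i).1 (hc i).1]
    exact hf _ _ <| ((hcop i).coprime_div_left (hb i).1).coprime_div_right (hc i).1
  simp only [Pi.mul_apply, hfbc, prod_mul_distrib, hψbc]
  ring

theorem apply_prod_eq_piDivisorSum_of_prime_pow {f : ℕ → R} {ψ : (ι → ℕ) → R}
    (hf : ∀ m n, m.Coprime n → f (m * n) = f m * f n)
    (hψ : ∀ m n : ι → ℕ, Nat.gcd (∏ i, m i) (∏ i, n i) = 1 →
      ψ (fun i => m i * n i) = ψ m * ψ n)
    (hpp : ∀ p, p.Prime → ∀ e : ι → ℕ,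
      f (∏ i, p ^ e i) = piDivisorSum f ψ fun i => p ^ e i)
    (n : ι → ℕ) (hn : ∀ i, 0 < n i) : f (∏ i, n i) = piDivisorSum f ψ n := by
  induction hN : ∏ i, n i using Nat.strong_induction_on generalizing n with
  | _ N ih =>
    rw [← hN]
    by_cases h1 : N = 1
    · obtain rfl : n = fun _ => 2 ^ 0 :=
        funext fun i => by simpa using prod_eq_one_iff.1 (hN.trans h1) i (mem_univ i)
      exact hpp 2 Nat.prime_two 0
    obtain ⟨p, hp, hpN⟩ := Nat.exists_prime_and_dvd h1
    set e : ι → ℕ := fun i => (n i).factorization p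
    set m : ι → ℕ := fun i => ordCompl[p] (n i)
    have hnm : n = (fun i => p ^ e i) * m :=
      funext fun i => (Nat.ordProj_mul_ordCompl_eq_self (n i) p).symm
    have hcop : (∏ i, p ^ e i).Coprime (∏ i, m i) := by
      rw [prod_pow_eq_pow_sum]
      exact Nat.Coprime.pow_left _ (Nat.Coprime.prod_right fun i _ =>
        Nat.coprime_ordCompl hp (hn i).ne')
    have hlt : ∏ i, m i < N := by
      obtain ⟨j, -, hpj⟩ := (Prime.dvd_finsetProd_iff hp.prime _).1 (hN ▸ hpN)
      rw [← hN]
      refine prod_lt_prod (fun i _ => Nat.ordCompl_pos p (hn i).ne')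
        (fun i _ => Nat.ordCompl_le (n i) p) ⟨j, mem_univ j, Nat.div_lt_self (hn j) ?_⟩
      exact Nat.one_lt_pow (hp.factorization_pos_of_dvd (hn j).ne' hpj).ne' hp.one_lt
    have hprod : ∏ i, n i = (∏ i, p ^ e i) * ∏ i, m i := by
      rw [hnm]
      exact prod_mul_distrib
    rw [hprod, hf _ _ hcop, hnm, piDivisorSum_mul hf hψ hcop, hpp p hp e,
      ih _ hlt m (fun i => Nat.ordCompl_pos p (hn i).ne') rfl]

theorem piDivisorSum_prime_pow (f : ℕ → R) (ψ : (ι → ℕ) → R) {p : ℕ} (hp : p.Prime)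
    (e : ι → ℕ) :
    piDivisorSum f ψ (fun i => p ^ e i) =
      ∑ μ ∈ Fintype.piFinset fun i => range (e i + 1),
        (∏ i, f (p ^ (e i - μ i))) * ψ (fun i => p ^ μ i) := by
  simp_rw [piDivisorSum, Nat.divisors_prime_pow hp, map_eq_image]
  rw [Fintype.piFinset_image, sum_image]
  · refine sum_congr rfl fun μ hμ => ?_
    simp only [Fintype.mem_piFinset, mem_range] at hμ
    simp only [Function.Embedding.coeFn_mk, Nat.pow_div (Nat.lt_succ_iff.1 (hμ _)) hp.pos]
  · intro μ _ ν _ h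
    exact funext fun i => Nat.pow_right_injective hp.two_le (congrFun h i)

end Divisors

section Convolution

variable {R : Type*} [CommSemiring R] {f : ℕ → R} {g h : ℕ →* R}

theorem convolution_apply_mul_of_coprime (hf : ∀ n, f n = ∑ d ∈ n.divisors, g d * h (n / d))
    {m n : ℕ} (hmn : m.Coprime n) : f (m * n) = f m * f n := by
  rw [hf, sum_divisors_mul_of_coprime hmn, hf, hf, sum_mul_sum]
  refine sum_congr rfl fun b hb => sum_congr rfl fun c hc => ?_
  rw [← Nat.div_mul_div_comm (Nat.dvd_of_mem_divisors hb) (Nat.dvd_of_mem_divisors hc), map_mul,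
    map_mul]
  ring

theorem convolution_apply_prime_pow (hf : ∀ n, f n = ∑ d ∈ n.divisors, g d * h (n / d))
    {p : ℕ} (hp : p.Prime) (k : ℕ) :
    f (p ^ k) = geomSum₂ (g p) (h p) (k + 1) := by
  rw [hf, Nat.sum_divisors_prime_pow hp, geomSum₂]
  refine sum_congr rfl fun i hi => ?_
  rw [Nat.pow_div (Nat.lt_succ_iff.1 (mem_range.1 hi)) hp.pos, map_pow, map_pow,
    Nat.add_sub_cancel]

end Convolution

end BuscheRamanujan

open BuscheRamanujan

theorem busche_ramanujan_r_vars_general {r : ℕ} (g h f : ℕ → ℂ)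
    (hg1 : g 1 = 1) (hg : ∀ m n : ℕ, g (m * n) = g m * g n)
    (hh1 : h 1 = 1) (hh : ∀ m n : ℕ, h (m * n) = h m * h n)
    (hf : ∀ n : ℕ, f n = ∑ d ∈ n.divisors, g d * h (n / d))
    (ψ : (Fin r → ℕ) → ℂ)
    (hψmul : ∀ m n : Fin r → ℕ, Nat.gcd (∏ i, m i) (∏ i, n i) = 1 →
      ψ (fun i => m i * n i) = ψ m * ψ n)
    (hψp : ∀ p : ℕ, p.Prime → ∀ ν : Fin r → ℕ,
      ψ (fun i => p ^ ν i) =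
        if ∀ i, ν i = 0 then 1
        else if (∀ i, ν i ≤ 1) ∧ 2 ≤ ∑ i, ν i then
          (-1 : ℂ) ^ (∑ i, ν i - 1) * g p * h p * f (p ^ (∑ i, ν i - 2))
        else 0)
    (n : Fin r → ℕ) (hn : ∀ i, 0 < n i) :
    f (∏ i, n i) = ∑ a ∈ Fintype.piFinset fun i => (n i).divisors,
      (∏ i, f (n i / a i)) * ψ a := by
  let G : ℕ →* ℂ := ⟨⟨g, hg1⟩, hg⟩
  let H : ℕ →* ℂ := ⟨⟨h, hh1⟩, hh⟩
  have hfGH : ∀ n, f n = ∑ d ∈ n.divisors, G d * H (n / d) := hf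
  refine apply_prod_eq_piDivisorSum_of_prime_pow
    (fun _ _ => convolution_apply_mul_of_coprime hfGH) hψmul
    (fun p hp e => ?_) n hn
  have hfp : ∀ k, f (p ^ k) = geomSum₂ (g p) (h p) (k + 1) :=
    convolution_apply_prime_pow hfGH hp
  rw [piDivisorSum_prime_pow f ψ hp, prod_pow_eq_pow_sum, hfp,
    ← sum_prod_geomSum₂_mul_psiLocal]
  refine sum_congr rfl fun μ _ => ?_
  simp only [hψp p hp μ, hfp, psiLocal]
  -- the two sides differ only in the `Decidable` instances of their conditions
  congr

theorem busche_ramanujan_r_vars {r : ℕ} (hr : 1 ≤ r) (g h f : ℕ → ℂ)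
    (hg1 : g 1 = 1) (hg : ∀ m n : ℕ, g (m * n) = g m * g n)
    (hh1 : h 1 = 1) (hh : ∀ m n : ℕ, h (m * n) = h m * h n)
    (hf : ∀ n : ℕ, f n = ∑ d ∈ n.divisors, g d * h (n / d))
    (ψ : (Fin r → ℕ) → ℂ)
    (hψmul : ∀ m n : Fin r → ℕ, Nat.gcd (∏ i, m i) (∏ i, n i) = 1 →
      ψ (fun i => m i * n i) = ψ m * ψ n)
    (hψp : ∀ p : ℕ, p.Prime → ∀ ν : Fin r → ℕ,
      ψ (fun i => p ^ ν i) =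
        if ∀ i, ν i = 0 then 1
        else if (∀ i, ν i ≤ 1) ∧ 2 ≤ ∑ i, ν i then
          (-1 : ℂ) ^ (∑ i, ν i - 1) * g p * h p * f (p ^ (∑ i, ν i - 2))
        else 0)
    (n : Fin r → ℕ) (hn : ∀ i, 0 < n i) :
    f (∏ i, n i) = ∑ a ∈ Fintype.piFinset fun i => (n i).divisors,
      (∏ i, f (n i / a i)) * ψ a :=
  busche_ramanujan_r_vars_general g h f hg1 hg hh1 hh hf ψ hψmul hψp n hn
end

section
/- Let g and h be completely multiplicative arithmetic functions, f = g * h, and r ≥ 1. Let ψ_f be the multiplicative function of r variables defined by ψ_f(p^{ν_1},...,p^{ν_r}) = 1 if all ν_i = 0; (−1)^{j−1} g(p) h(p) f(p^{j−2}) if all ν_i ∈ {0,1} and j := ν_1+...+ν_r ≥ 2; and 0 otherwise. Let ψ_f^{-1} be the inverse of ψ_f under the r-variable Dirichlet convolution. Then for all positive integers n_1,...,n_r: f(n_1) ··· f(n_r) = ∑_{a_1 | n_1, ..., a_r | n_r} f(n_1···n_r/(a_1···a_r)) ψ_f^{-1}(a_1,...,a_r). -/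
/-!
Write `F n = ∏ i, f (n i)` and `F' n = f (∏ i, n i)`. The identity says `F = ψ⁻¹ * F'`, i.e.
`ψ * F = F'` for the `r`-variable Dirichlet convolution. Both sides of the latter are
multiplicative, so it suffices to check it on tuples `(p ^ ν₁, …, p ^ νᵣ)`. There, with `a = g p`
and `b = h p`, `f (p ^ k) = ∑_{i ≤ k} a ^ i b ^ (k - i)`, and in `ℂ[κ] / ((κ + a)(κ + b))` one has
`(κ + a + b) ^ k = f (p ^ k) + f (p ^ (k - 1)) κ` for `k ≥ 1`, while `ψ` at a `0/1`-tuple with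
`j` ones is the constant coefficient of `κ ^ j`. Expanding
`∏ i, (κ + a + b) ^ νᵢ = (κ + a + b) ^ (∑ i, νᵢ)` and taking constant coefficients gives the
prime-power case.
-/

open Finset Polynomial

section QuadraticRecurrence

variable {R : Type*} [CommRing R]

def geomSum₂ (a b : R) (n : ℕ) : R := ∑ i ∈ range n, a ^ i * b ^ (n - 1 - i)

@[simp] lemma geomSum₂_zero (a b : R) : geomSum₂ a b 0 = 0 := by simp [geomSum₂]

@[simp] lemma geomSum₂_one (a b : R) : geomSum₂ a b 1 = 1 := by simp [geomSum₂]

lemma geomSum₂_add_two (a b : R) (n : ℕ) :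
    geomSum₂ a b (n + 2) = (a + b) * geomSum₂ a b (n + 1) - a * b * geomSum₂ a b n := by
  have h₂ : geomSum₂ a b (n + 2) = a ^ (n + 1) + b * geomSum₂ a b (n + 1) :=
    geom_sum₂_succ_eq a b
  have h₁ : geomSum₂ a b (n + 1) = a ^ n + b * geomSum₂ a b n := geom_sum₂_succ_eq a b
  linear_combination h₂ - a * h₁

lemma pow_succ_eq_geomSum₂_mul_sub {A : Type*} [CommRing A] [Algebra R A] (a b : R) {ρ : A}
    (hρ : (ρ - algebraMap R A a) * (ρ - algebraMap R A b) = 0) (n : ℕ) :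
    ρ ^ (n + 1) = algebraMap R A (geomSum₂ a b (n + 1)) * ρ
      - algebraMap R A (a * b * geomSum₂ a b n) := by
  induction n with
  | zero => simp
  | succ n ih =>
    rw [pow_succ, ih, geomSum₂_add_two]
    simp only [map_sub, map_mul, map_add]
    linear_combination algebraMap R A (geomSum₂ a b (n + 1)) * hρ

/-- The value of `ψ_f` at a tuple `(p ^ μ₁, …, p ^ μᵣ)` with all `μᵢ ≤ 1` and `j = ∑ μᵢ`,
where `a = g p`, `b = h p` and `f (p ^ k) = geomSum₂ a b (k + 1)`. -/
def localPsi (a b : R) : ℕ → R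
  | 0 => 1
  | n + 1 => (-1) ^ n * a * b * geomSum₂ a b n

end QuadraticRecurrence

section QuadraticAlgebra

variable {R A : Type*} [CommRing R] [CommRing A] [Algebra R A] {a b : R} {κ : A}

lemma LinearMap.map_algebraMap_add_algebraMap_mul {φ : A →ₗ[R] R} (hφ₁ : φ 1 = 1)
    (hφκ : φ κ = 0) (c₀ c₁ : R) : φ (algebraMap R A c₀ + algebraMap R A c₁ * κ) = c₀ := by
  rw [← mul_one (algebraMap R A c₀), ← Algebra.smul_def, ← Algebra.smul_def, map_add, map_smul,
    map_smul, hφ₁, hφκ, smul_eq_mul, smul_zero, mul_one, add_zero]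

lemma pow_succ_eq_of_add_mul_add_eq_zero
    (hκ : (κ + algebraMap R A a) * (κ + algebraMap R A b) = 0) (n : ℕ) :
    κ ^ (n + 1) = algebraMap R A ((-1) ^ n * a * b * geomSum₂ a b n)
      + algebraMap R A ((-1) ^ n * geomSum₂ a b (n + 1)) * κ := by
  have h := pow_succ_eq_geomSum₂_mul_sub a b (ρ := -κ) (by linear_combination hκ) n
  have hs : ((-1 : A) ^ (n + 1)) ^ 2 = 1 := by
    rw [← pow_mul, (even_two.mul_left _).neg_one_pow]
  rw [neg_pow] at h
  simp only [map_mul, map_pow, map_neg, map_one] at h ⊢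
  linear_combination (-1 : A) ^ (n + 1) * h - κ ^ (n + 1) * hs

lemma add_add_pow_eq_of_add_mul_add_eq_zero
    (hκ : (κ + algebraMap R A a) * (κ + algebraMap R A b) = 0) (k : ℕ) :
    (κ + algebraMap R A a + algebraMap R A b) ^ k
      = algebraMap R A (geomSum₂ a b (k + 1)) + algebraMap R A (geomSum₂ a b k) * κ := by
  cases k with
  | zero => simp
  | succ n =>
    rw [pow_succ_eq_geomSum₂_mul_sub a b (by linear_combination hκ) n, geomSum₂_add_two]
    simp only [map_sub, map_mul, map_add]
    ring

variable (a b) in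
lemma sum_range_ite_mul_pow (k : ℕ) :
    ∑ j ∈ range (k + 1), algebraMap R A (if j ≤ 1 then geomSum₂ a b (k - j + 1) else 0) * κ ^ j
      = algebraMap R A (geomSum₂ a b (k + 1)) + algebraMap R A (geomSum₂ a b k) * κ := by
  cases k with
  | zero => simp
  | succ n =>
    rw [sum_range_succ', sum_range_succ', sum_eq_zero fun j _ => by simp]
    simp [add_comm]

lemma LinearMap.map_pow_eq_localPsi (hκ : (κ + algebraMap R A a) * (κ + algebraMap R A b) = 0)
    {φ : A →ₗ[R] R} (hφ₁ : φ 1 = 1) (hφκ : φ κ = 0) (j : ℕ) :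
    φ (κ ^ j) = localPsi a b j := by
  cases j with
  | zero => rw [pow_zero, hφ₁, localPsi]
  | succ n =>
    rw [pow_succ_eq_of_add_mul_add_eq_zero hκ, φ.map_algebraMap_add_algebraMap_mul hφ₁ hφκ,
      localPsi]

lemma sum_localPsi_mul_prod_geomSum₂_of_linearMap {ι : Type*} [Fintype ι] [DecidableEq ι]
    (hκ : (κ + algebraMap R A a) * (κ + algebraMap R A b) = 0)
    {φ : A →ₗ[R] R} (hφ₁ : φ 1 = 1) (hφκ : φ κ = 0) (ν : ι → ℕ) :
    ∑ μ ∈ Fintype.piFinset (fun i => range (ν i + 1)),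
      (if ∀ i, μ i ≤ 1 then localPsi a b (∑ i, μ i) else 0) * ∏ i, geomSum₂ a b (ν i - μ i + 1)
      = geomSum₂ a b (∑ i, ν i + 1) := calc
  _ = ∑ μ ∈ Fintype.piFinset (fun i => range (ν i + 1)), φ (∏ i,
        algebraMap R A (if μ i ≤ 1 then geomSum₂ a b (ν i - μ i + 1) else 0) * κ ^ μ i) := by
    refine sum_congr rfl fun μ _ => ?_
    rw [prod_mul_distrib, ← map_prod, prod_pow_eq_pow_sum, ← Algebra.smul_def, map_smul,
      φ.map_pow_eq_localPsi hκ hφ₁ hφκ, smul_eq_mul, prod_ite_zero]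
    simp only [mem_univ, true_imp_iff]
    split_ifs <;> simp [mul_comm]
  _ = φ (∏ i, ∑ j ∈ range (ν i + 1),
        algebraMap R A (if j ≤ 1 then geomSum₂ a b (ν i - j + 1) else 0) * κ ^ j) := by
    rw [prod_univ_sum, map_sum]
  _ = φ ((κ + algebraMap R A a + algebraMap R A b) ^ ∑ i, ν i) := by
    simp_rw [sum_range_ite_mul_pow, ← add_add_pow_eq_of_add_mul_add_eq_zero hκ,
      prod_pow_eq_pow_sum]
  _ = geomSum₂ a b (∑ i, ν i + 1) := by
    rw [add_add_pow_eq_of_add_mul_add_eq_zero hκ, φ.map_algebraMap_add_algebraMap_mul hφ₁ hφκ]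

variable (a b) in
theorem sum_localPsi_mul_prod_geomSum₂ {ι : Type*} [Fintype ι] [DecidableEq ι] (ν : ι → ℕ) :
    ∑ μ ∈ Fintype.piFinset (fun i => range (ν i + 1)),
      (if ∀ i, μ i ≤ 1 then localPsi a b (∑ i, μ i) else 0) * ∏ i, geomSum₂ a b (ν i - μ i + 1)
      = geomSum₂ a b (∑ i, ν i + 1) := by
  nontriviality R
  set q : R[X] := (X + C a) * (X + C b)
  have hq : q.Monic := (monic_X_add_C a).mul (monic_X_add_C b)
  have hq₂ : q.degree = 2 := by
    rw [(monic_X_add_C b).degree_mul, degree_X_add_C, degree_X_add_C]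
    rfl
  have hmod {p : R[X]} (hp : p.degree < 2) :
      AdjoinRoot.modByMonicHom hq (AdjoinRoot.mk q p) = p :=
    (modByMonic_eq_self_iff hq).mpr (hq₂ ▸ hp)
  refine sum_localPsi_mul_prod_geomSum₂_of_linearMap (κ := AdjoinRoot.root q) ?_
    (φ := (lcoeff R 0).comp (AdjoinRoot.modByMonicHom hq)) ?_ ?_ ν
  · rw [AdjoinRoot.algebraMap_eq, ← AdjoinRoot.mk_X, ← AdjoinRoot.mk_C, ← AdjoinRoot.mk_C,
      ← map_add, ← map_add, ← map_mul, AdjoinRoot.mk_self]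
  · rw [LinearMap.comp_apply, ← map_one (AdjoinRoot.mk q), hmod (by rw [degree_one]; decide)]
    simp
  · rw [LinearMap.comp_apply, ← AdjoinRoot.mk_X, hmod (by rw [degree_X]; decide)]
    simp

end QuadraticAlgebra

lemma Nat.Coprime.coprime_apply_of_coprime_prod {ι : Type*} [Fintype ι] {m n : ι → ℕ}
    (h : Nat.Coprime (∏ i, m i) (∏ i, n i)) (i : ι) : (m i).Coprime (n i) :=
  (h.coprime_dvd_left (dvd_prod_of_mem m (mem_univ i))).coprime_dvd_right
    (dvd_prod_of_mem n (mem_univ i))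

lemma exists_eq_primePow_mul {ι : Type*} [Fintype ι] {n : ι → ℕ} (hn : ∀ i, 0 < n i)
    (h₁ : ∏ i, n i ≠ 1) :
    ∃ (p : ℕ) (e m : ι → ℕ), p.Prime ∧ (∀ i, 0 < m i) ∧ Nat.Coprime (∏ i, p ^ e i) (∏ i, m i) ∧
      ∏ i, m i < ∏ i, n i ∧ n = (fun i => p ^ e i) * m := by
  obtain ⟨p, hp, hpn⟩ := Nat.exists_prime_and_dvd h₁
  have hm : ¬ p ∣ ∏ i, n i / p ^ (n i).factorization p := by
    rw [hp.prime.dvd_finsetProd_iff]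
    rintro ⟨i, -, hi⟩
    exact Nat.not_dvd_ordCompl hp (hn i).ne' hi
  refine ⟨p, fun i => (n i).factorization p, fun i => n i / p ^ (n i).factorization p, hp,
    fun i => Nat.ordCompl_pos p (hn i).ne', ?_, ?_, ?_⟩
  · rw [prod_pow_eq_pow_sum]
    exact .pow_left _ ((Nat.Prime.coprime_iff_not_dvd hp).mpr hm)
  · refine lt_of_le_of_ne (Nat.le_of_dvd (prod_pos fun i _ => hn i) ?_) fun h => hm (h ▸ hpn)
    exact prod_dvd_prod_of_dvd _ _ fun i _ => Nat.ordCompl_dvd _ _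
  · exact funext fun i => (Nat.ordProj_mul_ordCompl_eq_self (n i) p).symm

section MultiplicativePi

variable {ι R : Type*} [Fintype ι] [CommSemiring R]

/-- Only positive tuples are constrained: they form the domain `ℕ_{>0} ^ r` of the paper. -/
def IsMultiplicativePi (F : (ι → ℕ) → R) : Prop :=
  ∀ m n : ι → ℕ, (∀ i, 0 < m i) → (∀ i, 0 < n i) → Nat.Coprime (∏ i, m i) (∏ i, n i) →
    F (m * n) = F m * F n

theorem IsMultiplicativePi.eq_of_eq_on_primePow {F G : (ι → ℕ) → R} (hF : IsMultiplicativePi F)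
    (hG : IsMultiplicativePi G)
    (h : ∀ p, p.Prime → ∀ ν : ι → ℕ, F (fun i => p ^ ν i) = G (fun i => p ^ ν i))
    {n : ι → ℕ} (hn : ∀ i, 0 < n i) : F n = G n := by
  induction hN : ∏ i, n i using Nat.strong_induction_on generalizing n with
  | _ N ih =>
  by_cases h₁ : ∏ i, n i = 1
  · have : n = fun _ => 2 ^ 0 := funext fun i =>
      Nat.eq_one_of_dvd_one (h₁ ▸ dvd_prod_of_mem n (mem_univ i))
    exact this ▸ h 2 Nat.prime_two 0
  · obtain ⟨p, e, m, hp, hm, hcop, hlt, rfl⟩ := exists_eq_primePow_mul hn h₁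
    have hpe : ∀ i, 0 < p ^ e i := fun i => pow_pos hp.pos _
    rw [hF _ _ hpe hm hcop, hG _ _ hpe hm hcop, h p hp e, ih _ (hN ▸ hlt) hm rfl]

end MultiplicativePi

section DirichletConvolutionPi

variable {ι R : Type*} [Fintype ι] [DecidableEq ι] [CommSemiring R]

def divisorsPi (n : ι → ℕ) : Finset (ι → ℕ) := Fintype.piFinset fun i => (n i).divisors

@[simp] lemma mem_divisorsPi {a n : ι → ℕ} : a ∈ divisorsPi n ↔ ∀ i, a i ∣ n i ∧ n i ≠ 0 := by
  simp [divisorsPi]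

lemma pos_of_mem_divisorsPi {a n : ι → ℕ} (ha : a ∈ divisorsPi n) (i : ι) : 0 < a i :=
  Nat.pos_of_mem_divisors (Fintype.mem_piFinset.mp ha i)

lemma div_mem_divisorsPi {a n : ι → ℕ} (ha : a ∈ divisorsPi n) : n / a ∈ divisorsPi n :=
  mem_divisorsPi.mpr fun i => ⟨Nat.div_dvd_of_dvd (mem_divisorsPi.mp ha i).1,
    (mem_divisorsPi.mp ha i).2⟩

lemma div_div_of_mem_divisorsPi {a n : ι → ℕ} (ha : a ∈ divisorsPi n) : n / (n / a) = a :=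
  funext fun i => Nat.div_div_self (mem_divisorsPi.mp ha i).1 (mem_divisorsPi.mp ha i).2

lemma prod_div_of_mem_divisorsPi {a n : ι → ℕ} (ha : a ∈ divisorsPi n) :
    (∏ i, n i) / ∏ i, a i = ∏ i, (n / a) i := by
  refine Nat.div_eq_of_eq_mul_left (prod_pos fun i _ => pos_of_mem_divisorsPi ha i) ?_
  rw [← prod_mul_distrib]
  exact prod_congr rfl fun i _ => (Nat.div_mul_cancel (mem_divisorsPi.mp ha i).1).symm

lemma sum_divisorsPi_mul {M : Type*} [AddCommMonoid M] {m n : ι → ℕ}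
    (hmn : ∀ i, (m i).Coprime (n i)) (Φ : (ι → ℕ) → M) :
    ∑ a ∈ divisorsPi (m * n), Φ a = ∑ b ∈ divisorsPi m, ∑ c ∈ divisorsPi n, Φ (b * c) := by
  have : divisorsPi (m * n) = (divisorsPi m ×ˢ divisorsPi n).image fun x => x.1 * x.2 := by
    change Fintype.piFinset (fun i => (m i * n i).divisors) = _
    simp_rw [Nat.divisors_mul]
    exact (Fintype.piFinset_image₂ _ _ _).trans (image_uncurry_product _ _ _).symm
  rw [this, sum_image, sum_product]
  rintro ⟨b, c⟩ hbc ⟨b', c'⟩ hbc' h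
  simp only [coe_product, Set.mem_prod, mem_coe, divisorsPi, Fintype.mem_piFinset] at hbc hbc'
  have key i := (hmn i).mul_injOn_divisors (x₁ := (b i, c i)) (x₂ := (b' i, c' i))
    (mem_product.mpr ⟨hbc.1 i, hbc.2 i⟩) (mem_product.mpr ⟨hbc'.1 i, hbc'.2 i⟩) (congrFun h i)
  exact Prod.ext (funext fun i => (Prod.ext_iff.mp (key i)).1)
    (funext fun i => (Prod.ext_iff.mp (key i)).2)

lemma sum_divisorsPi_primePow {M : Type*} [AddCommMonoid M] {p : ℕ} (hp : p.Prime) (ν : ι → ℕ)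
    (Φ : (ι → ℕ) → M) :
    ∑ a ∈ divisorsPi (fun i => p ^ ν i), Φ a
      = ∑ μ ∈ Fintype.piFinset (fun i => range (ν i + 1)), Φ (fun i => p ^ μ i) := by
  rw [divisorsPi]
  simp_rw [Nat.divisors_prime_pow hp, map_eq_image]
  rw [Fintype.piFinset_image, sum_image]
  · rfl
  · intro μ _ μ' _ h
    exact funext fun i => Nat.pow_right_injective hp.two_le (congrFun h i)

def dirichletConvPi (F G : (ι → ℕ) → R) (n : ι → ℕ) : R := ∑ a ∈ divisorsPi n, F a * G (n / a)

lemma dirichletConvPi_comm (F G : (ι → ℕ) → R) : dirichletConvPi F G = dirichletConvPi G F := by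
  ext n
  refine sum_nbij' (n / ·) (n / ·) (fun a => div_mem_divisorsPi) (fun a => div_mem_divisorsPi)
    (fun a => div_div_of_mem_divisorsPi) (fun a => div_div_of_mem_divisorsPi) fun a ha => ?_
  rw [div_div_of_mem_divisorsPi ha, mul_comm]

lemma dirichletConvPi_assoc (F G H : (ι → ℕ) → R) :
    dirichletConvPi (dirichletConvPi F G) H = dirichletConvPi F (dirichletConvPi G H) := by
  ext n
  simp only [dirichletConvPi, sum_mul, mul_sum, sum_sigma']
  refine sum_nbij' (fun x => ⟨x.2, x.1 / x.2⟩) (fun x => ⟨x.1 * x.2, x.1⟩) ?_ ?_ ?_ ?_ ?_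
  all_goals simp only [mem_sigma, mem_divisorsPi, Pi.div_apply, Pi.mul_apply]
  · rintro ⟨a, b⟩ ⟨ha, hb⟩
    refine ⟨fun i => ⟨(hb i).1.trans (ha i).1, (ha i).2⟩,
      fun i => ⟨Nat.div_dvd_div (hb i).1 (ha i).1, ?_⟩⟩
    exact (Nat.div_ne_zero_iff_of_dvd ((hb i).1.trans (ha i).1)).mpr
      ⟨(ha i).2, ne_zero_of_dvd_ne_zero (hb i).2 (hb i).1⟩
  · rintro ⟨b, c⟩ ⟨hb, hc⟩
    have hbc i : b i * c i ∣ n i := Nat.mul_dvd_of_dvd_div (hb i).1 (hc i).1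
    exact ⟨fun i => ⟨hbc i, (hb i).2⟩,
      fun i => ⟨dvd_mul_right _ _, ne_zero_of_dvd_ne_zero (hb i).2 (hbc i)⟩⟩
  · rintro ⟨a, b⟩ ⟨-, hb⟩
    simp only [Sigma.mk.injEq, heq_eq_eq, and_true]
    exact funext fun i => Nat.mul_div_cancel' (hb i).1
  · rintro ⟨b, c⟩ ⟨hb, -⟩
    simp only [Sigma.mk.injEq, heq_eq_eq, true_and]
    exact funext fun i => Nat.mul_div_cancel_left _
      (Nat.pos_of_ne_zero (ne_zero_of_dvd_ne_zero (hb i).2 (hb i).1))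
  · rintro ⟨a, b⟩ ⟨-, hb⟩
    have : n / b / (a / b) = n / a := funext fun i => by
      simp only [Pi.div_apply]
      rw [Nat.div_div_eq_div_mul, Nat.mul_div_cancel' (hb i).1]
    simp only [this, mul_assoc]

lemma dirichletConvPi_congr_left {F F' : (ι → ℕ) → R} (G : (ι → ℕ) → R)
    (h : ∀ a, (∀ i, 0 < a i) → F a = F' a) (n : ι → ℕ) :
    dirichletConvPi F G n = dirichletConvPi F' G n :=
  sum_congr rfl fun a ha => by rw [h a (pos_of_mem_divisorsPi ha)]

lemma dirichletConvPi_congr_right (F : (ι → ℕ) → R) {G G' : (ι → ℕ) → R}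
    (h : ∀ a, (∀ i, 0 < a i) → G a = G' a) (n : ι → ℕ) :
    dirichletConvPi F G n = dirichletConvPi F G' n :=
  sum_congr rfl fun a ha => by rw [h _ (pos_of_mem_divisorsPi (div_mem_divisorsPi ha))]

lemma dirichletConvPi_ite_one_left [DecidablePred fun a : ι → ℕ => ∀ i, a i = 1]
    (F : (ι → ℕ) → R) {n : ι → ℕ} (hn : ∀ i, n i ≠ 0) :
    dirichletConvPi (fun a => if ∀ i, a i = 1 then 1 else 0) F n = F n := by
  rw [dirichletConvPi, sum_eq_single 1 (fun a _ ha => ?_) (fun h => (h (by simp [hn])).elim)]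
  · simp only [Pi.one_apply, implies_true, if_true, one_mul]
    exact congrArg F (funext fun i => Nat.div_one (n i))
  · rw [if_neg (show ¬ ∀ i, a i = 1 from fun h => ha (funext h)), zero_mul]

lemma IsMultiplicativePi.dirichletConvPi {F G : (ι → ℕ) → R} (hF : IsMultiplicativePi F)
    (hG : IsMultiplicativePi G) : IsMultiplicativePi (dirichletConvPi F G) := by
  intro m n _ _ hmn
  have hcop {b c : ι → ℕ} (hb : b ∈ divisorsPi m) (hc : c ∈ divisorsPi n) :
      Nat.Coprime (∏ i, b i) (∏ i, c i) :=
    (hmn.coprime_dvd_left (prod_dvd_prod_of_dvd _ _ fun i _ => (mem_divisorsPi.mp hb i).1)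
      ).coprime_dvd_right (prod_dvd_prod_of_dvd _ _ fun i _ => (mem_divisorsPi.mp hc i).1)
  unfold _root_.dirichletConvPi
  rw [sum_mul_sum, sum_divisorsPi_mul hmn.coprime_apply_of_coprime_prod]
  refine sum_congr rfl fun b hb => sum_congr rfl fun c hc => ?_
  have hdiv : m * n / (b * c) = m / b * (n / c) := funext fun i =>
    (Nat.div_mul_div_comm (mem_divisorsPi.mp hb i).1 (mem_divisorsPi.mp hc i).1).symm
  have hb' := div_mem_divisorsPi hb
  have hc' := div_mem_divisorsPi hc
  rw [hdiv, hF b c (pos_of_mem_divisorsPi hb) (pos_of_mem_divisorsPi hc) (hcop hb hc),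
    hG _ _ (pos_of_mem_divisorsPi hb') (pos_of_mem_divisorsPi hc') (hcop hb' hc')]
  ring

end DirichletConvolutionPi

section BuscheRamanujan

variable {R : Type*} [CommRing R] {g h f : ℕ → R}

lemma map_mul_of_coprime_of_eq_sum_divisors (hg : ∀ m n, g (m * n) = g m * g n)
    (hh : ∀ m n, h (m * n) = h m * h n) (hf : ∀ n, f n = ∑ d ∈ n.divisors, g d * h (n / d))
    {m n : ℕ} (hmn : m.Coprime n) : f (m * n) = f m * f n := by
  rw [hf, hf m, hf n, Nat.divisors_mul, mul_def, sum_image hmn.mul_injOn_divisors, sum_product,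
    sum_mul_sum]
  refine sum_congr rfl fun d₁ hd₁ => sum_congr rfl fun d₂ hd₂ => ?_
  rw [← Nat.div_mul_div_comm (Nat.dvd_of_mem_divisors hd₁) (Nat.dvd_of_mem_divisors hd₂), hg, hh]
  ring

lemma eq_geomSum₂_of_eq_sum_divisors (hg₁ : g 1 = 1) (hg : ∀ m n, g (m * n) = g m * g n)
    (hh₁ : h 1 = 1) (hh : ∀ m n, h (m * n) = h m * h n)
    (hf : ∀ n, f n = ∑ d ∈ n.divisors, g d * h (n / d)) {p : ℕ} (hp : p.Prime) (k : ℕ) :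
    f (p ^ k) = geomSum₂ (g p) (h p) (k + 1) := by
  rw [hf, Nat.sum_divisors_prime_pow hp, geomSum₂, Nat.add_sub_cancel]
  refine sum_congr rfl fun i hi => ?_
  rw [Nat.pow_div (Nat.le_of_lt_succ (mem_range.mp hi)) hp.pos]
  exact congrArg₂ (· * ·) (map_pow (⟨⟨g, hg₁⟩, hg⟩ : ℕ →* R) p i)
    (map_pow (⟨⟨h, hh₁⟩, hh⟩ : ℕ →* R) p (k - i))

variable {ι : Type*} [Fintype ι]

lemma isMultiplicativePi_prod_apply (hf : ∀ {m n}, m.Coprime n → f (m * n) = f m * f n) :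
    IsMultiplicativePi fun n : ι → ℕ => ∏ i, f (n i) := fun m n _ _ hmn => by
  simp only [Pi.mul_apply, hf (hmn.coprime_apply_of_coprime_prod _), prod_mul_distrib]

lemma isMultiplicativePi_apply_prod (hf : ∀ {m n}, m.Coprime n → f (m * n) = f m * f n) :
    IsMultiplicativePi fun n : ι → ℕ => f (∏ i, n i) := fun m n _ _ hmn => by
  simp only [Pi.mul_apply, prod_mul_distrib, hf hmn]

lemma ite_eq_ite_localPsi (a b : R) {c : ℕ → R} (hc : ∀ k, c k = geomSum₂ a b (k + 1))
    (μ : ι → ℕ) :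
    (if ∀ i, μ i = 0 then 1
      else if (∀ i, μ i ≤ 1) ∧ 2 ≤ ∑ i, μ i then
        (-1 : R) ^ (∑ i, μ i - 1) * a * b * c (∑ i, μ i - 2)
      else 0) = if ∀ i, μ i ≤ 1 then localPsi a b (∑ i, μ i) else 0 := by
  have hzero : (∀ i, μ i = 0) ↔ ∑ i, μ i = 0 := by simp [sum_eq_zero_iff]
  by_cases hle : ∀ i, μ i ≤ 1
  · simp only [hle, implies_true, true_and, if_true, hzero]
    rcases ∑ i, μ i with _ | _ | J <;> simp [localPsi, hc]
  · rw [if_neg hle, if_neg fun h => hle fun i => (h i).le.trans zero_le_one,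
      if_neg fun h => hle h.1]

lemma dirichletConvPi_primePow_eq [DecidableEq ι] {ψ : (ι → ℕ) → R} {p : ℕ} (hp : p.Prime)
    {a b : R} (hf : ∀ k, f (p ^ k) = geomSum₂ a b (k + 1))
    (hψ : ∀ μ : ι → ℕ, ψ (fun i => p ^ μ i) =
      if ∀ i, μ i ≤ 1 then localPsi a b (∑ i, μ i) else 0) (ν : ι → ℕ) :
    dirichletConvPi ψ (fun m => ∏ i, f (m i)) (fun i => p ^ ν i) = f (∏ i, p ^ ν i) := by
  rw [dirichletConvPi, sum_divisorsPi_primePow hp, prod_pow_eq_pow_sum, hf,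
    ← sum_localPsi_mul_prod_geomSum₂]
  refine sum_congr rfl fun μ hμ => ?_
  rw [hψ]
  refine congrArg _ (prod_congr rfl fun i _ => ?_)
  have hμν : μ i ≤ ν i := Nat.le_of_lt_succ (mem_range.mp (Fintype.mem_piFinset.mp hμ i))
  rw [Pi.div_apply, Nat.pow_div hμν hp.pos, hf]

end BuscheRamanujan

theorem busche_ramanujan_r_vars_inverse_general {r : ℕ} (g h f : ℕ → ℂ)
    (hg1 : g 1 = 1) (hg : ∀ m n : ℕ, g (m * n) = g m * g n)
    (hh1 : h 1 = 1) (hh : ∀ m n : ℕ, h (m * n) = h m * h n)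
    (hf : ∀ n : ℕ, f n = ∑ d ∈ n.divisors, g d * h (n / d))
    (ψ : (Fin r → ℕ) → ℂ)
    (hψmul : ∀ m n : Fin r → ℕ, Nat.gcd (∏ i, m i) (∏ i, n i) = 1 →
      ψ (fun i => m i * n i) = ψ m * ψ n)
    (hψp : ∀ p : ℕ, p.Prime → ∀ ν : Fin r → ℕ,
      ψ (fun i => p ^ ν i) =
        if ∀ i, ν i = 0 then 1
        else if (∀ i, ν i ≤ 1) ∧ 2 ≤ ∑ i, ν i then
          (-1 : ℂ) ^ (∑ i, ν i - 1) * g p * h p * f (p ^ (∑ i, ν i - 2))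
        else 0)
    (ψinv : (Fin r → ℕ) → ℂ)
    (hψinv : ∀ n : Fin r → ℕ, (∀ i, 0 < n i) →
      (∑ a ∈ Fintype.piFinset fun i => (n i).divisors,
        ψ a * ψinv (fun i => n i / a i)) = if ∀ i, n i = 1 then 1 else 0)
    (n : Fin r → ℕ) (hn : ∀ i, 0 < n i) :
    (∏ i, f (n i)) = ∑ a ∈ Fintype.piFinset fun i => (n i).divisors,
      f ((∏ i, n i) / ∏ i, a i) * ψinv a := by
  have hf_mul : ∀ {m n}, m.Coprime n → f (m * n) = f m * f n :=
    map_mul_of_coprime_of_eq_sum_divisors hg hh hf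
  have hf_pow {p : ℕ} (hp : p.Prime) := eq_geomSum₂_of_eq_sum_divisors hg1 hg hh1 hh hf hp
  have hψ : IsMultiplicativePi ψ := fun m n _ _ hmn => hψmul m n hmn
  have key {m} (hm : ∀ i, 0 < m i) :
      dirichletConvPi ψ (fun m => ∏ i, f (m i)) m = f (∏ i, m i) :=
    (hψ.dirichletConvPi (isMultiplicativePi_prod_apply hf_mul)).eq_of_eq_on_primePow
      (isMultiplicativePi_apply_prod hf_mul) (fun p hp => dirichletConvPi_primePow_eq hp
        (hf_pow hp) fun μ => by
          rw [hψp p hp μ]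
          convert ite_eq_ite_localPsi (c := fun k => f (p ^ k)) _ _ (hf_pow hp) μ) hm
  calc ∏ i, f (n i)
      = dirichletConvPi (dirichletConvPi ψ ψinv) (fun m => ∏ i, f (m i)) n := by
        rw [dirichletConvPi_congr_left (F := dirichletConvPi ψ ψinv) _ hψinv,
          dirichletConvPi_ite_one_left _ fun i => (hn i).ne']
    _ = dirichletConvPi ψinv (fun m => f (∏ i, m i)) n := by
        rw [dirichletConvPi_comm ψ, dirichletConvPi_assoc, dirichletConvPi_congr_right _ @key]
    _ = _ := sum_congr rfl fun a ha => by rw [mul_comm, prod_div_of_mem_divisorsPi ha]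

theorem busche_ramanujan_r_vars_inverse {r : ℕ} (hr : 1 ≤ r) (g h f : ℕ → ℂ)
    (hg1 : g 1 = 1) (hg : ∀ m n : ℕ, g (m * n) = g m * g n)
    (hh1 : h 1 = 1) (hh : ∀ m n : ℕ, h (m * n) = h m * h n)
    (hf : ∀ n : ℕ, f n = ∑ d ∈ n.divisors, g d * h (n / d))
    (ψ : (Fin r → ℕ) → ℂ)
    (hψmul : ∀ m n : Fin r → ℕ, Nat.gcd (∏ i, m i) (∏ i, n i) = 1 →
      ψ (fun i => m i * n i) = ψ m * ψ n)
    (hψp : ∀ p : ℕ, p.Prime → ∀ ν : Fin r → ℕ,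
      ψ (fun i => p ^ ν i) =
        if ∀ i, ν i = 0 then 1
        else if (∀ i, ν i ≤ 1) ∧ 2 ≤ ∑ i, ν i then
          (-1 : ℂ) ^ (∑ i, ν i - 1) * g p * h p * f (p ^ (∑ i, ν i - 2))
        else 0)
    (ψinv : (Fin r → ℕ) → ℂ)
    (hψinv : ∀ n : Fin r → ℕ, (∀ i, 0 < n i) →
      (∑ a ∈ Fintype.piFinset fun i => (n i).divisors,
        ψ a * ψinv (fun i => n i / a i)) = if ∀ i, n i = 1 then 1 else 0)
    (n : Fin r → ℕ) (hn : ∀ i, 0 < n i) :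
    (∏ i, f (n i)) = ∑ a ∈ Fintype.piFinset fun i => (n i).divisors,
      f ((∏ i, n i) / ∏ i, a i) * ψinv a :=
  busche_ramanujan_r_vars_inverse_general g h f hg1 hg hh1 hh hf ψ hψmul hψp ψinv hψinv n hn
end

section
/- For every k ≥ 1 and all positive integers n_1, n_2: d_k(n_1 n_2) = ∑_{a_1 | n_1, a_2 | n_2} d_k(n_1/a_1) d_k(n_2/a_2) θ_k(a_1, a_2), where d_k is the Piltz divisor function and θ_k is the multiplicative function of two variables with θ_k(p^{ν_1}, p^{ν_2}) = 1 if ν_1 = ν_2 = 0; (−1)^{ν_1+ν_2−1} C(k, ν_1+ν_2) if ν_1, ν_2 ≥ 1 and ν_1 + ν_2 ≤ k; and 0 otherwise. -/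
/-!
Both sides are multiplicative functions of the pair `(n₁, n₂)`, the right-hand side being a
two-variable Dirichlet convolution, so it suffices to compare them at `(p ^ α, p ^ β)`. There
`d_k(p ^ m)` is the coefficient of `x ^ m` in `A = (1 - x) ^ (-k)`, and `θ_k(p ^ i, p ^ j)` is the
coefficient of `x ^ i y ^ j` in `(x P(y) - y P(x)) / (x - y)` with `P = (1 - x) ^ k`. The identity
then only uses `P * A = 1`: summing over `j` first turns `θ_k(p ^ i, ·)` into the `i`-th coefficient
of `P` times a tail of `A`, and summing over `i` cancels `P` against `A`.
-/

/-- The Piltz divisor function `d_k(n)`: the number of ordered `k`-tuples of positive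
integers with product `n`. -/
def piltz (k n : ℕ) : ℕ :=
  ((Fintype.piFinset fun _ : Fin k => n.divisors).filter (fun a => ∏ i, a i = n)).card

open Finset PowerSeries ArithmeticFunction
open scoped ArithmeticFunction.zeta

namespace PowerSeries

variable {R : Type*} [CommRing R]

theorem coeff_mul_eq_sum_range (P Q : R⟦X⟧) (n : ℕ) :
    coeff n (P * Q) = ∑ s ∈ range (n + 1), coeff s P * coeff (n - s) Q :=
  (coeff_mul n P Q).trans
    (Nat.sum_antidiagonal_eq_sum_range_succ (fun i j => coeff i P * coeff j Q) n)

theorem coeff_one_sub_X_pow (k s : ℕ) :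
    coeff s ((1 - X : R⟦X⟧) ^ k) = (-1) ^ s * k.choose s := by
  have h : (1 - X : R⟦X⟧) ^ k =
      rescale (-1) ((((1 : Polynomial R) + Polynomial.X) ^ k : Polynomial R) : R⟦X⟧) := by
    simp [map_pow, sub_eq_add_neg]
  rw [h, coeff_rescale, Polynomial.coeff_coe, Polynomial.coeff_one_add_X_pow]

theorem one_sub_X_pow_mul_invOneSubPow_val (k : ℕ) :
    (1 - X : R⟦X⟧) ^ k * (invOneSubPow R k).val = 1 := by
  rw [← invOneSubPow_inv_eq_one_sub_pow]
  exact (invOneSubPow R k).inv_val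

theorem coeff_invOneSubPow_succ (k m : ℕ) :
    coeff m (invOneSubPow R (k + 1)).val =
      ∑ i ∈ range (m + 1), coeff i (invOneSubPow R k).val := by
  rw [invOneSubPow_add, Units.val_mul, coeff_mul_eq_sum_range]
  simp [invOneSubPow_val_succ_eq_mk_add_choose]

/-- The coefficient of `x ^ i y ^ j` in `(x P(y) - y P(x)) / (x - y)`. -/
noncomputable def buscheCoeff (P : R⟦X⟧) (i j : ℕ) : R :=
  if i = 0 ∧ j = 0 then coeff 0 P else if 1 ≤ i ∧ 1 ≤ j then -coeff (i + j) P else 0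

theorem buscheCoeff_one_sub_X_pow (k i j : ℕ) :
    buscheCoeff ((1 - X : R⟦X⟧) ^ k) i j =
      if i = 0 ∧ j = 0 then 1
      else if 1 ≤ i ∧ 1 ≤ j ∧ i + j ≤ k then (-1 : R) ^ (i + j - 1) * k.choose (i + j)
      else 0 := by
  simp only [buscheCoeff, coeff_one_sub_X_pow, pow_zero, Nat.choose_zero_right, Nat.cast_one,
    mul_one]
  split_ifs with h₀ h₁ h₂ h₂
  · rfl
  · obtain ⟨s, hs⟩ : ∃ s, i + j = s + 1 := ⟨i + j - 1, by omega⟩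
    rw [hs, Nat.add_sub_cancel, pow_succ]
    ring
  · rw [Nat.choose_eq_zero_of_lt (by omega), Nat.cast_zero, mul_zero, neg_zero]
  · exact absurd ⟨h₂.1, h₂.2.1⟩ h₁
  · rfl

section

variable {P A : R⟦X⟧}

/-- For `i ≥ 1` the sum over `j` is, up to sign, part of the vanishing coefficient of
`x ^ (i + β)` in `P * A`. -/
theorem sum_coeff_mul_buscheCoeff (hPA : P * A = 1) (i β : ℕ) :
    ∑ j ∈ range (β + 1), coeff (β - j) A * buscheCoeff P i j =
      coeff i (P * mk fun r => coeff (β + r) A) := by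
  rw [coeff_mul_eq_sum_range, sum_range_succ']
  rcases Nat.eq_zero_or_pos i with rfl | hi
  · simp [buscheCoeff, mul_comm]
  have hvanish : coeff (i + β) (P * A) = 0 := by
    rw [hPA, coeff_one, if_neg (by omega)]
  rw [coeff_mul_eq_sum_range, show i + β + 1 = (i + 1) + β by omega, sum_range_add] at hvanish
  have hhead : ∑ s ∈ range (i + 1), coeff s P * coeff (i + β - s) A =
      ∑ s ∈ range (i + 1), coeff s P * coeff (i - s) (mk fun r => coeff (β + r) A) := by
    refine sum_congr rfl fun s hs => ?_
    rw [coeff_mk, show β + (i - s) = i + β - s by grind]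
  have htail : ∀ j ∈ range β, coeff (β - (j + 1)) A * buscheCoeff P i (j + 1) =
      -(coeff (i + 1 + j) P * coeff (i + β - (i + 1 + j)) A) := by
    intro j _
    rw [buscheCoeff, if_neg (by omega), if_pos (by omega),
      show i + β - (i + 1 + j) = β - (j + 1) by omega, show i + (j + 1) = i + 1 + j by omega]
    ring
  have hzero : buscheCoeff P i 0 = 0 := by simp [buscheCoeff, hi.ne']
  rw [sum_congr rfl htail, sum_neg_distrib, hzero, mul_zero, add_zero, ← hhead]
  linear_combination -hvanish

theorem sum_sum_coeff_mul_buscheCoeff (hPA : P * A = 1) (α β : ℕ) :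
    ∑ i ∈ range (α + 1), ∑ j ∈ range (β + 1),
        coeff (α - i) A * coeff (β - j) A * buscheCoeff P i j =
      coeff (α + β) A := by
  calc _ = ∑ i ∈ range (α + 1), coeff (α - i) A * coeff i (P * mk fun r => coeff (β + r) A) := by
          simp_rw [mul_assoc, ← mul_sum, sum_coeff_mul_buscheCoeff hPA]
    _ = coeff α (P * A * mk fun r => coeff (β + r) A) := by
          rw [mul_right_comm, coeff_mul_eq_sum_range]
          exact sum_congr rfl fun i _ => mul_comm _ _
    _ = coeff (α + β) A := by rw [hPA, one_mul, coeff_mk, add_comm]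

end

end PowerSeries

theorem Nat.sum_divisors_mul_of_coprime {M : Type*} [AddCommMonoid M] {m n : ℕ}
    (hmn : m.Coprime n) (f : ℕ → M) :
    ∑ d ∈ (m * n).divisors, f d = ∑ a ∈ m.divisors, ∑ b ∈ n.divisors, f (a * b) := by
  rw [hmn.divisors_mul, sum_map]
  exact (sum_attach _ fun x : ℕ × ℕ => f (x.1 * x.2)).trans (sum_product' _ _ fun a b => f (a * b))

def IsMultiplicative₂ {R : Type*} [Monoid R] (f : ℕ → ℕ → R) : Prop :=
  f 1 1 = 1 ∧ ∀ m₁ m₂ n₁ n₂ : ℕ, Nat.Coprime (m₁ * m₂) (n₁ * n₂) →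
    f (m₁ * n₁) (m₂ * n₂) = f m₁ m₂ * f n₁ n₂

def dirichletConv₂ {R : Type*} [Mul R] [AddCommMonoid R] (f g : ℕ → ℕ → R) (n₁ n₂ : ℕ) : R :=
  ∑ a₁ ∈ n₁.divisors, ∑ a₂ ∈ n₂.divisors, f (n₁ / a₁) (n₂ / a₂) * g a₁ a₂

theorem dirichletConv₂_prime_pow {R : Type*} [Mul R] [AddCommMonoid R] (f g : ℕ → ℕ → R)
    {p : ℕ} (hp : p.Prime) (α β : ℕ) :
    dirichletConv₂ f g (p ^ α) (p ^ β) = ∑ i ∈ range (α + 1), ∑ j ∈ range (β + 1),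
      f (p ^ (α - i)) (p ^ (β - j)) * g (p ^ i) (p ^ j) := by
  simp only [dirichletConv₂, Nat.sum_divisors_prime_pow hp]
  refine sum_congr rfl fun i hi => sum_congr rfl fun j hj => ?_
  rw [Nat.pow_div (by simpa [Nat.lt_succ_iff] using hi) hp.pos,
    Nat.pow_div (by simpa [Nat.lt_succ_iff] using hj) hp.pos]

namespace IsMultiplicative₂

variable {R : Type*}

/-- `d ↦ f (gcd n₁ d) (gcd n₂ d)` is multiplicative in one variable and takes the value
`f n₁ n₂` at `d = n₁ * n₂`. -/
theorem apply_eq_factorization_prod [CommMonoid R] {f : ℕ → ℕ → R} (hf : IsMultiplicative₂ f)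
    {n₁ n₂ : ℕ} (hn : n₁ * n₂ ≠ 0) :
    f n₁ n₂ = (n₁ * n₂).factorization.prod fun p e => f (n₁.gcd (p ^ e)) (n₂.gcd (p ^ e)) := by
  have hmul : ∀ x y, x.Coprime y → f (n₁.gcd (x * y)) (n₂.gcd (x * y)) =
      f (n₁.gcd x) (n₂.gcd x) * f (n₁.gcd y) (n₂.gcd y) := by
    intro x y hxy
    have hsq : (x * x).Coprime (y * y) := .mul_left (hxy.mul_right hxy) (hxy.mul_right hxy)
    rw [Nat.Coprime.gcd_mul n₁ hxy, Nat.Coprime.gcd_mul n₂ hxy]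
    exact hf.2 _ _ _ _ (hsq.of_dvd (mul_dvd_mul (Nat.gcd_dvd_right _ _) (Nat.gcd_dvd_right _ _))
      (mul_dvd_mul (Nat.gcd_dvd_right _ _) (Nat.gcd_dvd_right _ _)))
  have hprod := Nat.multiplicative_factorization (fun d => f (n₁.gcd d) (n₂.gcd d)) hmul
    (by simpa using hf.1) hn
  simpa [Nat.gcd_mul_right_right, Nat.gcd_mul_left_right] using hprod

theorem eq_of_eq_on_prime_pow [CommMonoid R] {f g : ℕ → ℕ → R} (hf : IsMultiplicative₂ f)
    (hg : IsMultiplicative₂ g)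
    (h : ∀ p : ℕ, p.Prime → ∀ i j : ℕ, f (p ^ i) (p ^ j) = g (p ^ i) (p ^ j))
    {n₁ n₂ : ℕ} (hn₁ : n₁ ≠ 0) (hn₂ : n₂ ≠ 0) : f n₁ n₂ = g n₁ n₂ := by
  have hn := mul_ne_zero hn₁ hn₂
  rw [hf.apply_eq_factorization_prod hn, hg.apply_eq_factorization_prod hn]
  refine Finsupp.prod_congr fun p hp => ?_
  have hp : p.Prime := Nat.prime_of_mem_primeFactors (Nat.support_factorization _ ▸ hp)
  obtain ⟨i, -, hi⟩ := (Nat.dvd_prime_pow hp).1 (Nat.gcd_dvd_right n₁ _)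
  obtain ⟨j, -, hj⟩ := (Nat.dvd_prime_pow hp).1 (Nat.gcd_dvd_right n₂ _)
  rw [hi, hj, h p hp]

theorem dirichletConv₂ [CommSemiring R] {f g : ℕ → ℕ → R} (hf : IsMultiplicative₂ f)
    (hg : IsMultiplicative₂ g) : IsMultiplicative₂ (dirichletConv₂ f g) := by
  refine ⟨by simp [_root_.dirichletConv₂, hf.1, hg.1], fun m₁ m₂ n₁ n₂ h => ?_⟩
  have h₁ : m₁.Coprime n₁ := h.of_dvd (dvd_mul_right _ _) (dvd_mul_right _ _)
  have h₂ : m₂.Coprime n₂ := h.of_dvd (dvd_mul_left _ _) (dvd_mul_left _ _)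
  simp only [_root_.dirichletConv₂]
  rw [Nat.sum_divisors_mul_of_coprime h₁, sum_mul_sum]
  refine sum_congr rfl fun b₁ hb₁ => sum_congr rfl fun c₁ hc₁ => ?_
  rw [Nat.sum_divisors_mul_of_coprime h₂, sum_mul_sum]
  refine sum_congr rfl fun b₂ hb₂ => sum_congr rfl fun c₂ hc₂ => ?_
  have hb₁ := Nat.dvd_of_mem_divisors hb₁
  have hb₂ := Nat.dvd_of_mem_divisors hb₂
  have hc₁ := Nat.dvd_of_mem_divisors hc₁
  have hc₂ := Nat.dvd_of_mem_divisors hc₂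
  have hquot : (m₁ / b₁ * (m₂ / b₂)).Coprime (n₁ / c₁ * (n₂ / c₂)) :=
    h.of_dvd (mul_dvd_mul (Nat.div_dvd_of_dvd hb₁) (Nat.div_dvd_of_dvd hb₂))
      (mul_dvd_mul (Nat.div_dvd_of_dvd hc₁) (Nat.div_dvd_of_dvd hc₂))
  have hdiv : (b₁ * b₂).Coprime (c₁ * c₂) := h.of_dvd (mul_dvd_mul hb₁ hb₂) (mul_dvd_mul hc₁ hc₂)
  rw [← Nat.div_mul_div_comm hb₁ hc₁, ← Nat.div_mul_div_comm hb₂ hc₂, hf.2 _ _ _ _ hquot,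
    hg.2 _ _ _ _ hdiv]
  ring

end IsMultiplicative₂

namespace ArithmeticFunction.IsMultiplicative

variable {R : Type*} [CommSemiring R] {f : ArithmeticFunction R}

theorem isMultiplicative₂_apply_mul (hf : f.IsMultiplicative) :
    IsMultiplicative₂ fun m n => f (m * n) := by
  refine ⟨by simp [hf.map_one], fun m₁ m₂ n₁ n₂ h => ?_⟩
  simp only [mul_mul_mul_comm m₁, hf.map_mul_of_coprime h]

theorem isMultiplicative₂_apply_mul_apply (hf : f.IsMultiplicative) :
    IsMultiplicative₂ fun m n => f m * f n := by
  refine ⟨by simp [hf.map_one], fun m₁ m₂ n₁ n₂ h => ?_⟩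
  simp only [hf.map_mul_of_coprime (h.of_dvd (dvd_mul_right _ _) (dvd_mul_right _ _)),
    hf.map_mul_of_coprime (h.of_dvd (dvd_mul_left _ _) (dvd_mul_left _ _))]
  ring

end ArithmeticFunction.IsMultiplicative

theorem Nat.card_finMulAntidiag_succ (k n : ℕ) :
    #(Nat.finMulAntidiag (k + 1) n) = ∑ d ∈ n.divisors, #(Nat.finMulAntidiag k d) := by
  rw [card_eq_sum_card_fiberwise (f := fun a => ∏ i : Fin k, a i.succ) (t := n.divisors)]
  · refine sum_congr rfl fun d hd => ?_
    obtain ⟨⟨e, rfl⟩, hde⟩ := Nat.mem_divisors.1 hd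
    refine card_nbij' Fin.tail (fun b => Fin.cons e b) (fun a ha => ?_) (fun b hb => ?_)
      (fun a ha => ?_) (fun b _ => Fin.tail_cons _ _)
    · simp only [mem_coe, mem_filter, Nat.mem_finMulAntidiag, Fin.prod_univ_succ] at ha ⊢
      exact ⟨ha.2, left_ne_zero_of_mul hde⟩
    · simp only [mem_coe, Nat.mem_finMulAntidiag] at hb
      simp [Fin.prod_univ_succ, hb.1, mul_comm, hde]
    · simp only [mem_coe, mem_filter, Nat.mem_finMulAntidiag, Fin.prod_univ_succ] at ha
      obtain ⟨⟨hprod, -⟩, htail⟩ := ha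
      have ha₀ : a 0 = e := Nat.eq_of_mul_eq_mul_left
        (Nat.pos_of_ne_zero (left_ne_zero_of_mul hde)) (by rw [← hprod, htail, mul_comm])
      simpa [ha₀] using Fin.cons_self_tail a
  · intro a ha
    simp only [mem_coe, Nat.mem_finMulAntidiag, Fin.prod_univ_succ] at ha
    exact Nat.mem_divisors.2 ⟨Dvd.intro_left _ ha.1, ha.2⟩

theorem piltz_eq_card_finMulAntidiag (k n : ℕ) : piltz k n = #(Nat.finMulAntidiag k n) := by
  rcases eq_or_ne n 0 with rfl | hn
  · cases k <;> simp [piltz]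
  · rw [piltz, Nat.finMulAntidiag_eq_piFinset_divisors_filter dvd_rfl hn]

theorem cast_piltz_eq_zeta_pow {R : Type*} [Semiring R] (k n : ℕ) :
    (piltz k n : R) = ((ζ : ArithmeticFunction R) ^ k) n := by
  induction k generalizing n with
  | zero =>
    rw [piltz_eq_card_finMulAntidiag, pow_zero, one_apply]
    split_ifs with h
    · simp [h, Nat.finMulAntidiag_one]
    · simp [Nat.finMulAntidiag_zero_left h]
  | succ k ih =>
    rw [piltz_eq_card_finMulAntidiag, Nat.card_finMulAntidiag_succ, pow_succ, coe_mul_zeta_apply,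
      Nat.cast_sum]
    exact sum_congr rfl fun d _ => by rw [← piltz_eq_card_finMulAntidiag, ih]

theorem zeta_pow_apply_prime_pow {R : Type*} [CommRing R] (k : ℕ) {p : ℕ} (hp : p.Prime)
    (m : ℕ) : ((ζ : ArithmeticFunction R) ^ k) (p ^ m) = coeff m (invOneSubPow R k).val := by
  induction k generalizing m with
  | zero => simp [invOneSubPow_zero, one_apply, coeff_one, hp.one_lt.ne']
  | succ k ih =>
    rw [pow_succ, coe_mul_zeta_apply, Nat.sum_divisors_prime_pow hp, coeff_invOneSubPow_succ]
    exact sum_congr rfl fun i _ => ih i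

theorem busche_ramanujan_piltz_general {k : ℕ} (θ : ℕ → ℕ → ℤ)
    (hθmul : ∀ m₁ m₂ n₁ n₂ : ℕ, Nat.gcd (m₁ * m₂) (n₁ * n₂) = 1 →
      θ (m₁ * n₁) (m₂ * n₂) = θ m₁ m₂ * θ n₁ n₂)
    (hθp : ∀ p : ℕ, p.Prime → ∀ ν₁ ν₂ : ℕ,
      θ (p ^ ν₁) (p ^ ν₂) =
        if ν₁ = 0 ∧ ν₂ = 0 then 1
        else if 1 ≤ ν₁ ∧ 1 ≤ ν₂ ∧ ν₁ + ν₂ ≤ k then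
          (-1 : ℤ) ^ (ν₁ + ν₂ - 1) * (k.choose (ν₁ + ν₂) : ℤ)
        else 0)
    (n₁ n₂ : ℕ) (hn₁ : 0 < n₁) (hn₂ : 0 < n₂) :
    (piltz k (n₁ * n₂) : ℤ) = ∑ a₁ ∈ n₁.divisors, ∑ a₂ ∈ n₂.divisors,
      (piltz k (n₁ / a₁) : ℤ) * (piltz k (n₂ / a₂) : ℤ) * θ a₁ a₂ := by
  have hζ : IsMultiplicative ((ζ : ArithmeticFunction ℤ) ^ k) := isMultiplicative_zeta.natCast.pow
  have hθ : IsMultiplicative₂ θ := ⟨by simpa using hθp 2 Nat.prime_two 0 0, hθmul⟩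
  simp only [cast_piltz_eq_zeta_pow]
  refine hζ.isMultiplicative₂_apply_mul.eq_of_eq_on_prime_pow
    (hζ.isMultiplicative₂_apply_mul_apply.dirichletConv₂ hθ) (fun p hp i j => ?_) hn₁.ne' hn₂.ne'
  have hθ' : ∀ i j, θ (p ^ i) (p ^ j) = buscheCoeff ((1 - X : ℤ⟦X⟧) ^ k) i j := fun i j => by
    rw [hθp p hp, buscheCoeff_one_sub_X_pow]
  simp only [dirichletConv₂_prime_pow _ _ hp, ← pow_add, zeta_pow_apply_prime_pow k hp, hθ']
  exact (sum_sum_coeff_mul_buscheCoeff (one_sub_X_pow_mul_invOneSubPow_val k) i j).symm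

theorem busche_ramanujan_piltz {k : ℕ} (hk : 1 ≤ k) (θ : ℕ → ℕ → ℤ)
    (hθmul : ∀ m₁ m₂ n₁ n₂ : ℕ, Nat.gcd (m₁ * m₂) (n₁ * n₂) = 1 →
      θ (m₁ * n₁) (m₂ * n₂) = θ m₁ m₂ * θ n₁ n₂)
    (hθp : ∀ p : ℕ, p.Prime → ∀ ν₁ ν₂ : ℕ,
      θ (p ^ ν₁) (p ^ ν₂) =
        if ν₁ = 0 ∧ ν₂ = 0 then 1
        else if 1 ≤ ν₁ ∧ 1 ≤ ν₂ ∧ ν₁ + ν₂ ≤ k then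
          (-1 : ℤ) ^ (ν₁ + ν₂ - 1) * (k.choose (ν₁ + ν₂) : ℤ)
        else 0)
    (n₁ n₂ : ℕ) (hn₁ : 0 < n₁) (hn₂ : 0 < n₂) :
    (piltz k (n₁ * n₂) : ℤ) = ∑ a₁ ∈ n₁.divisors, ∑ a₂ ∈ n₂.divisors,
      (piltz k (n₁ / a₁) : ℤ) * (piltz k (n₂ / a₂) : ℤ) * θ a₁ a₂ :=
  busche_ramanujan_piltz_general θ hθmul hθp n₁ n₂ hn₁ hn₂
end

section
/- For distinct elements x_1,...,x_k of a field and integers m, n with 1 ≤ m, n ≤ k−1, the quantity c_{m,n} := (−1)^{m+n} ∑_{i=1}^k x_i^{k−1} ∏_{j≠i} (x_i − x_j)^{-1} e_m^{(i)} e_n^{(i)}, where e_m^{(i)} denotes the elementary symmetric polynomial of degree m in the variables x_1,...,x_k with x_i omitted, satisfies c_{m,n} = (−1)^{m+n−1} e_{m+n}(x_1,...,x_k) (which is 0 when m+n > k). -/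
/-!
Put `c(m, n) = ∑ᵢ wᵢ e_m^{(i)} e_n^{(i)}` (`esymmDelPairing`) for arbitrary weights `w`.
Substituting `e_{d+1}^{(i)} = e_{d+1} - xᵢ e_d^{(i)}` in both factors gives
`c(m+1, n) + e_{n+1} c(m, 0) = c(m, n+1) + e_{m+1} c(0, n)`, so as soon as `c(0, n) = 0` for
`n ≥ 1` the indices can be shifted from `m` to `n` until `c(m, n) = -c(0, 0) e_{m+n}`.

For `wᵢ = xᵢ^{k-1} ∏_{j≠i} (xᵢ - xⱼ)⁻¹`, the polynomial `∑ᵢ wᵢ ∏_{j≠i} (X - xⱼ)` is the Lagrange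
interpolant of `X^{k-1}`, hence equal to it; by Vieta its coefficient of `X^{k-1-n}` is
`(-1)ⁿ c(0, n)`, so `c(0, n)` is `1` for `n = 0` and `0` otherwise.
-/

/-- Elementary symmetric polynomial of degree `d` evaluated at `x`. -/
def esymmVal {R : Type*} [CommRing R] {k : ℕ} (x : Fin k → R) (d : ℕ) : R :=
  ∑ s ∈ Finset.univ.powersetCard d, ∏ i ∈ s, x i

/-- Elementary symmetric polynomial of degree `d` in the variables `x` with `x i` omitted. -/
def esymmDel {R : Type*} [CommRing R] {k : ℕ} (x : Fin k → R) (i : Fin k) (d : ℕ) : R :=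
  ∑ s ∈ (Finset.univ.erase i).powersetCard d, ∏ j ∈ s, x j

open Finset Polynomial

theorem Multiset.esymm_cons_succ {R : Type*} [CommSemiring R] (a : R) (s : Multiset R) (n : ℕ) :
    (a ::ₘ s).esymm (n + 1) = s.esymm (n + 1) + a * s.esymm n := by
  simp [Multiset.esymm, Multiset.map_map, Multiset.sum_map_mul_left]

section CommRing

variable {R : Type*} [CommRing R] {k : ℕ} (x : Fin k → R)

theorem esymmDel_zero (i : Fin k) : esymmDel x i 0 = 1 := by
  simp [esymmDel]

theorem esymmDel_eq_esymm (i : Fin k) (d : ℕ) :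
    esymmDel x i d = ((univ.erase i).val.map x).esymm d :=
  (esymm_map_val x _ d).symm

theorem esymmVal_succ (i : Fin k) (d : ℕ) :
    esymmVal x (d + 1) = esymmDel x i (d + 1) + x i * esymmDel x i d := by
  rw [esymmVal, ← esymm_map_val, ← insert_erase (mem_univ i),
    insert_val_of_notMem (notMem_erase i _), Multiset.map_cons,
    Multiset.esymm_cons_succ, esymmDel_eq_esymm, esymmDel_eq_esymm]

theorem esymmDel_eq_zero {i : Fin k} {d : ℕ} (hd : k - 1 < d) : esymmDel x i d = 0 := by
  rw [esymmDel, powersetCard_eq_empty.2 (by simpa using hd), sum_empty]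

theorem coeff_nodal_erase (i : Fin k) {n : ℕ} (hn : n ≤ k - 1) :
    (Lagrange.nodal (univ.erase i) x).coeff (k - 1 - n) = (-1) ^ n * esymmDel x i n := by
  have hcard : Multiset.card ((univ.erase i).val.map x) = k - 1 := by simp
  have hmap : (univ.erase i).val.map (fun j => X - C (x j)) =
      ((univ.erase i).val.map x).map (fun t => X - C t) := by
    rw [Multiset.map_map]; rfl
  rw [Lagrange.nodal_eq, prod_eq_multiset_prod, hmap, Multiset.prod_X_sub_C_coeff _ (by omega),
    hcard, esymmDel_eq_esymm, Nat.sub_sub_self hn]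

variable (w : Fin k → R)

def esymmDelPairing (m n : ℕ) : R :=
  ∑ i, w i * esymmDel x i m * esymmDel x i n

theorem esymmDelPairing_comm (m n : ℕ) :
    esymmDelPairing x w m n = esymmDelPairing x w n m := by
  simp only [esymmDelPairing, mul_right_comm]

theorem esymmDelPairing_zero_zero : esymmDelPairing x w 0 0 = ∑ i, w i := by
  simp [esymmDelPairing, esymmDel_zero]

theorem esymmDelPairing_succ_left (m n : ℕ) :
    esymmDelPairing x w (m + 1) n + esymmVal x (n + 1) * esymmDelPairing x w m 0 =
      esymmDelPairing x w m (n + 1) + esymmVal x (m + 1) * esymmDelPairing x w 0 n := by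
  simp only [esymmDelPairing, esymmDel_zero, mul_sum, ← sum_add_distrib]
  refine sum_congr rfl fun i _ => ?_
  rw [esymmVal_succ x i m, esymmVal_succ x i n]
  ring

theorem esymmDelPairing_eq_neg_mul_esymmVal
    (hw : ∀ n, 1 ≤ n → esymmDelPairing x w 0 n = 0) {m n : ℕ} (hm : 1 ≤ m) (hn : 1 ≤ n) :
    esymmDelPairing x w m n = -(∑ i, w i) * esymmVal x (m + n) := by
  induction m, hm using Nat.le_induction generalizing n with
  | base =>
    have h := esymmDelPairing_succ_left x w 0 n
    rw [hw n hn, hw (n + 1) (by omega), esymmDelPairing_zero_zero] at h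
    rw [add_comm 1 n]
    linear_combination h
  | succ m hm ih =>
    have h := esymmDelPairing_succ_left x w m n
    rw [esymmDelPairing_comm x w m 0, hw m hm, hw n hn, ih (by omega : 1 ≤ n + 1)] at h
    rw [show m + 1 + n = m + (n + 1) by omega]
    linear_combination h

end CommRing

section Field

variable {K : Type*} [Field K] {k : ℕ} {x : Fin k → K}

theorem esymmDelPairing_nodalWeight_zero_left (hx : Function.Injective x) (hk : 0 < k)
    (n : ℕ) :
    esymmDelPairing x (fun i => x i ^ (k - 1) * Lagrange.nodalWeight univ x i) 0 n =
      if n = 0 then 1 else 0 := by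
  simp only [esymmDelPairing, esymmDel_zero, mul_one]
  rcases lt_or_ge (k - 1) n with hn | hn
  · simp [esymmDel_eq_zero x hn, show n ≠ 0 by omega]
  have hdeg : ((X : K[X]) ^ (k - 1)).degree < #(univ : Finset (Fin k)) := by
    rw [degree_X_pow, card_univ, Fintype.card_fin]
    exact_mod_cast Nat.sub_lt hk one_pos
  have hcoeff := congrArg (coeff · (k - 1 - n)) (Lagrange.eq_interpolate hx.injOn hdeg)
  simp only [Lagrange.interpolate_eq_nodalWeight_mul_nodal_div_X_sub_C,
    ← Lagrange.nodal_erase_eq_nodal_div (mem_univ _), finsetSum_coeff, coeff_mul_C,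
    coeff_C_mul, coeff_nodal_erase x _ hn, coeff_X_pow, eval_pow, eval_X] at hcoeff
  calc ∑ i, x i ^ (k - 1) * Lagrange.nodalWeight univ x i * esymmDel x i n
      = (-1) ^ n * ∑ i, Lagrange.nodalWeight univ x i * ((-1) ^ n * esymmDel x i n) *
          x i ^ (k - 1) := by
        have hsign : (-1 : K) ^ n * (-1) ^ n = 1 := by
          rw [← mul_pow, neg_one_mul, neg_neg, one_pow]
        rw [mul_sum]
        refine sum_congr rfl fun i _ => ?_
        linear_combination
          (-(x i ^ (k - 1) * Lagrange.nodalWeight univ x i * esymmDel x i n)) * hsign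
    _ = if n = 0 then 1 else 0 := by
        rw [← hcoeff]
        rcases eq_or_ne n 0 with rfl | hn0
        · simp
        · rw [if_neg (by omega), if_neg hn0, mul_zero]

end Field

theorem coeff_c_mn_general {K : Type*} [Field K] {k : ℕ} (x : Fin k → K)
    (hx : Function.Injective x) (m n : ℕ) (hm : 1 ≤ m)
    (hn : 1 ≤ n) :
    (-1 : K) ^ (m + n) * ∑ i : Fin k, x i ^ (k - 1) *
        (∏ j ∈ Finset.univ.erase i, (x i - x j)⁻¹) * esymmDel x i m * esymmDel x i n =
      (-1 : K) ^ (m + n - 1) * esymmVal x (m + n) := by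
  rcases k.eq_zero_or_pos with rfl | hk
  · rw [esymmVal, powersetCard_eq_empty.2 (by simp; omega)]
    simp
  set w : Fin k → K := fun i => x i ^ (k - 1) * Lagrange.nodalWeight univ x i
  have hw : ∀ n, esymmDelPairing x w 0 n = if n = 0 then 1 else 0 :=
    esymmDelPairing_nodalWeight_zero_left hx hk
  have hsum : esymmDelPairing x w m n = -esymmVal x (m + n) := by
    have hw_pos : ∀ n, 1 ≤ n → esymmDelPairing x w 0 n = 0 :=
      fun n hn => (hw n).trans (if_neg (by omega))
    rw [esymmDelPairing_eq_neg_mul_esymmVal x w hw_pos hm hn, ← esymmDelPairing_zero_zero, hw,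
      if_pos rfl, neg_one_mul]
  change (-1 : K) ^ (m + n) * esymmDelPairing x w m n = _
  rw [hsum, show m + n = m + n - 1 + 1 by omega, pow_succ, Nat.add_sub_cancel]
  ring

theorem coeff_c_mn {K : Type*} [Field K] {k : ℕ} (x : Fin k → K)
    (hx : Function.Injective x) (m n : ℕ) (hm : 1 ≤ m) (hm' : m ≤ k - 1)
    (hn : 1 ≤ n) (hn' : n ≤ k - 1) :
    (-1 : K) ^ (m + n) * ∑ i : Fin k, x i ^ (k - 1) *
        (∏ j ∈ Finset.univ.erase i, (x i - x j)⁻¹) * esymmDel x i m * esymmDel x i n =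
      (-1 : K) ^ (m + n - 1) * esymmVal x (m + n) :=
  coeff_c_mn_general x hx m n hm hn
end
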